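/- arXiv:0902.4038 — 9 statements merged into one kernel-verified Lean document; each statement's English description precedes it below -/
import Mathlib

section
/- For every countable linear order X, there exists an order-preserving injection (order embedding) f from X into the rationals ℚ such that the image of f is a closed subset of ℚ (with respect to the usual topology on ℚ). -/
/-!
Enumerate `ℚ` as `r₀, r₁, …` and give `q = r_k` the interval of length `2⁻¹ ^ k ^ 2` starting at
`cutSum q = ∑_{r_n < q} 2⁻¹ ^ n ^ 2`; these intervals are disjoint and ordered like `ℚ`, and
`gapPoint q` is a rational inside the interval of `q`. If the points `gapPoint q` with `q > a`
accumulate at `y`, the lengths of their intervals tend to `0`, so `y` is a limit of left endpoints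
and, by compactness of `ℕ → Bool`, equals `∑_{n ∈ S} 2⁻¹ ^ n ^ 2` for a set `S` containing the
infinitely many `n` with `r_n ≤ a`. Such a lacunary sum is irrational: multiplied by `2 ^ N ^ 2`
its tail beyond `N` is at most `4⁻¹ ^ N`, too small to be a nonzero multiple of `1 / d`.
So `gapPoint` maps `(a, ∞) ∩ ℚ` onto a closed discrete subset of `ℚ`.
-/
open Filter Topology Set

noncomputable section

def lacunaryWeight (n : ℕ) : ℝ := 2⁻¹ ^ n ^ 2

def lacunaryTerm (b : ℕ → Bool) (n : ℕ) : ℝ := if b n then lacunaryWeight n else 0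

def lacunarySum (b : ℕ → Bool) : ℝ := ∑' n, lacunaryTerm b n

lemma lacunaryWeight_pos (n : ℕ) : 0 < lacunaryWeight n := by
  unfold lacunaryWeight; positivity

lemma lacunaryWeight_le_pow (n : ℕ) : lacunaryWeight n ≤ 2⁻¹ ^ n :=
  pow_le_pow_of_le_one (by norm_num) (by norm_num) (Nat.le_self_pow two_ne_zero n)

lemma summable_lacunaryWeight : Summable lacunaryWeight :=
  summable_geometric_two.of_nonneg_of_le (fun n => (lacunaryWeight_pos n).le)
    (by simpa using lacunaryWeight_le_pow)

lemma tendsto_lacunaryWeight_atTop : Tendsto lacunaryWeight atTop (𝓝 0) :=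
  squeeze_zero (fun n => (lacunaryWeight_pos n).le) lacunaryWeight_le_pow
    (tendsto_pow_atTop_nhds_zero_of_lt_one (by norm_num) (by norm_num))

lemma lacunaryTerm_nonneg (b : ℕ → Bool) (n : ℕ) : 0 ≤ lacunaryTerm b n := by
  unfold lacunaryTerm; split <;> simp [(lacunaryWeight_pos n).le]

lemma lacunaryTerm_le (b : ℕ → Bool) (n : ℕ) : lacunaryTerm b n ≤ lacunaryWeight n := by
  unfold lacunaryTerm; split <;> simp [(lacunaryWeight_pos n).le]

lemma summable_lacunaryTerm (b : ℕ → Bool) : Summable (lacunaryTerm b) :=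
  summable_lacunaryWeight.of_nonneg_of_le (lacunaryTerm_nonneg b) (lacunaryTerm_le b)

lemma continuous_lacunarySum : Continuous lacunarySum :=
  continuous_tsum (fun n => (continuous_of_discreteTopology
      (f := fun t : Bool => if t then lacunaryWeight n else 0)).comp (continuous_apply n))
    summable_lacunaryWeight fun n b => by
      rw [Real.norm_of_nonneg (lacunaryTerm_nonneg b n)]; exact lacunaryTerm_le b n

lemma lacunarySum_add_lacunaryWeight_le {b b' : ℕ → Bool} (h : b ≤ b') {k : ℕ}
    (hk : b k = false) (hk' : b' k = true) :
    lacunarySum b + lacunaryWeight k ≤ lacunarySum b' := by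
  have hterm : ∀ n, lacunaryTerm b n + (if n = k then lacunaryWeight n else 0) ≤
      lacunaryTerm b' n := by
    intro n
    by_cases hn : n = k
    · subst hn; simp [lacunaryTerm, hk, hk']
    · have := h n
      unfold lacunaryTerm
      cases hb : b n <;> cases hb' : b' n <;>
        simp_all [Bool.le_iff_imp, (lacunaryWeight_pos n).le]
  calc lacunarySum b + lacunaryWeight k
      = ∑' n, (lacunaryTerm b n + if n = k then lacunaryWeight n else 0) := by
        rw [Summable.tsum_add (summable_lacunaryTerm b)
          (summable_of_ne_finset_zero (s := {k}) (by simp_all)), tsum_ite_eq]; rfl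
    _ ≤ lacunarySum b' := Summable.tsum_le_tsum hterm
        ((summable_lacunaryTerm b).add (summable_of_ne_finset_zero (s := {k}) (by simp_all)))
        (summable_lacunaryTerm b')

lemma irrational_of_forall_exists_mul_mem_Ioo {x : ℝ}
    (h : ∀ d : ℕ, 0 < d → ∃ (Q m : ℤ), (m : ℝ) < d * Q * x ∧ d * Q * x < m + 1) :
    Irrational x := by
  rintro ⟨q, rfl⟩
  obtain ⟨Q, m, h₁, h₂⟩ := h q.den q.pos
  have hint : (q.den : ℝ) * Q * q = ((Q * q.num : ℤ) : ℝ) := by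
    rw [mul_right_comm, ← Rat.cast_natCast, ← Rat.cast_mul, Rat.den_mul_eq_num]; push_cast; ring
  rw [hint] at h₁ h₂
  have h₁ : m < Q * q.num := by exact_mod_cast h₁
  have h₂ : Q * q.num < m + 1 := by exact_mod_cast h₂
  omega

lemma tsum_lacunaryTerm_nat_add_le (b : ℕ → Bool) (N : ℕ) :
    ∑' i, lacunaryTerm b (i + (N + 1)) ≤ 2⁻¹ ^ (N ^ 2 + 2 * N) := by
  have hgeom : Summable fun i : ℕ => (2⁻¹ : ℝ) ^ (N ^ 2 + 2 * N) * (2⁻¹ * 2⁻¹ ^ i) :=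
    ((summable_geometric_of_lt_one (by norm_num) (by norm_num)).mul_left _).mul_left _
  calc ∑' i, lacunaryTerm b (i + (N + 1))
      ≤ ∑' i : ℕ, (2⁻¹ : ℝ) ^ (N ^ 2 + 2 * N) * (2⁻¹ * 2⁻¹ ^ i) := by
        refine Summable.tsum_le_tsum (fun i => (lacunaryTerm_le b _).trans ?_)
          ((summable_nat_add_iff (N + 1)).2 (summable_lacunaryTerm b)) hgeom
        rw [← pow_succ', ← pow_add]
        exact pow_le_pow_of_le_one (by norm_num) (by norm_num) (by nlinarith)
    _ = 2⁻¹ ^ (N ^ 2 + 2 * N) := by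
        rw [tsum_mul_left, tsum_mul_left, tsum_geometric_inv_two]; norm_num

lemma exists_int_eq_two_pow_sq_mul_sum_lacunaryTerm (b : ℕ → Bool) (N : ℕ) :
    ∃ A : ℤ, (2 : ℝ) ^ N ^ 2 * ∑ n ∈ Finset.range (N + 1), lacunaryTerm b n = A := by
  refine ⟨∑ n ∈ Finset.range (N + 1), if b n then 2 ^ (N ^ 2 - n ^ 2) else 0, ?_⟩
  push_cast
  rw [Finset.mul_sum]
  refine Finset.sum_congr rfl fun n hn => ?_
  obtain ⟨k, hk⟩ := Nat.exists_eq_add_of_le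
    (Nat.pow_le_pow_left (Nat.lt_succ_iff.mp (Finset.mem_range.mp hn)) 2)
  rw [hk, Nat.add_sub_cancel_left, lacunaryTerm, lacunaryWeight]
  split
  · rw [pow_add, mul_right_comm, ← mul_pow, mul_inv_cancel₀ two_ne_zero, one_pow, one_mul]
  · simp

theorem irrational_lacunarySum {b : ℕ → Bool} (hb : {n | b n = true}.Infinite) :
    Irrational (lacunarySum b) := by
  refine irrational_of_forall_exists_mul_mem_Ioo fun d hd => ?_
  obtain ⟨A, hA⟩ := exists_int_eq_two_pow_sq_mul_sum_lacunaryTerm b d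
  set T := ∑' i, lacunaryTerm b (i + (d + 1))
  have hsplit : lacunarySum b = ∑ n ∈ Finset.range (d + 1), lacunaryTerm b n + T :=
    ((summable_lacunaryTerm b).sum_add_tsum_nat_add (d + 1)).symm
  have hT_pos : 0 < T := by
    obtain ⟨m, hm, hdm⟩ := hb.exists_gt d
    refine (summable_nat_add_iff (d + 1)).2 (summable_lacunaryTerm b) |>.tsum_pos
      (fun i => lacunaryTerm_nonneg b _) (m - (d + 1)) ?_
    rw [Nat.sub_add_cancel hdm, lacunaryTerm, if_pos (show b m = true from hm)]
    exact lacunaryWeight_pos m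
  have hT_le : (2 : ℝ) ^ d ^ 2 * T ≤ 2⁻¹ ^ (2 * d) := by
    calc (2 : ℝ) ^ d ^ 2 * T ≤ 2 ^ d ^ 2 * 2⁻¹ ^ (d ^ 2 + 2 * d) :=
          mul_le_mul_of_nonneg_left (tsum_lacunaryTerm_nat_add_le b d) (by positivity)
      _ = 2⁻¹ ^ (2 * d) := by
          rw [pow_add, ← mul_assoc, ← mul_pow, mul_inv_cancel₀ two_ne_zero, one_pow, one_mul]
  have hd_lt : (d : ℝ) * 2⁻¹ ^ (2 * d) < 1 := by
    have : d < 2 ^ (2 * d) := Nat.lt_two_pow_self.trans_le (Nat.pow_le_pow_right two_pos (by omega))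
    rw [inv_pow, mul_inv_lt_iff₀ (by positivity), one_mul]
    exact_mod_cast this
  have hkey : (d : ℝ) * (2 ^ d ^ 2 : ℤ) * lacunarySum b = (d * A : ℤ) + d * (2 ^ d ^ 2 * T) := by
    push_cast; rw [← hA, hsplit]; ring
  have hd : (0 : ℝ) < d := by exact_mod_cast hd
  have htail_pos : 0 < (d : ℝ) * (2 ^ d ^ 2 * T) := by positivity
  have htail_lt : (d : ℝ) * (2 ^ d ^ 2 * T) < 1 :=
    (mul_le_mul_of_nonneg_left hT_le hd.le).trans_lt hd_lt
  refine ⟨2 ^ d ^ 2, d * A, ?_, ?_⟩ <;> rw [hkey] <;> linarith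

def ratEnum : ℕ ≃ ℚ := (Denumerable.eqv ℚ).symm

def cutSum (q : ℚ) : ℝ := lacunarySum fun n => decide (ratEnum n < q)

lemma cutSum_add_lacunaryWeight_le {q q' : ℚ} (h : q < q') :
    cutSum q + lacunaryWeight (ratEnum.symm q) ≤ cutSum q' :=
  lacunarySum_add_lacunaryWeight_le
    (fun n => by simpa [Bool.le_iff_imp] using fun hn : ratEnum n < q => hn.trans h)
    (by simp) (by simpa using h)

lemma exists_rat_btwn_cutSum (q : ℚ) :
    ∃ r : ℚ, cutSum q < r ∧ (r : ℝ) < cutSum q + lacunaryWeight (ratEnum.symm q) :=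
  exists_rat_btwn (lt_add_of_pos_right _ (lacunaryWeight_pos _))

def gapPoint (q : ℚ) : ℚ := (exists_rat_btwn_cutSum q).choose

lemma cutSum_lt_gapPoint (q : ℚ) : cutSum q < gapPoint q :=
  (exists_rat_btwn_cutSum q).choose_spec.1

lemma gapPoint_lt (q : ℚ) : (gapPoint q : ℝ) < cutSum q + lacunaryWeight (ratEnum.symm q) :=
  (exists_rat_btwn_cutSum q).choose_spec.2

lemma strictMono_gapPoint : StrictMono gapPoint := fun q q' h => by
  have : (gapPoint q : ℝ) < gapPoint q' :=
    (gapPoint_lt q).trans_le ((cutSum_add_lacunaryWeight_le h).trans (cutSum_lt_gapPoint q').le)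
  exact_mod_cast this

lemma dist_gapPoint_cutSum_le (q : ℚ) :
    dist (gapPoint q : ℝ) (cutSum q) ≤ lacunaryWeight (ratEnum.symm q) := by
  rw [Real.dist_eq, abs_of_pos (sub_pos.2 (cutSum_lt_gapPoint q))]
  linarith [gapPoint_lt q]

lemma irrational_of_tendsto_gapPoint {a : ℚ} {l : Filter ℚ} [l.NeBot] (hl : l ≤ cofinite)
    (ha : l ≤ 𝓟 (Ioi a)) {y : ℝ} (hy : Tendsto (fun q => (gapPoint q : ℝ)) l (𝓝 y)) :
    Irrational y := by
  have hweight : Tendsto (fun q => lacunaryWeight (ratEnum.symm q)) l (𝓝 0) :=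
    tendsto_lacunaryWeight_atTop.comp
      (Nat.cofinite_eq_atTop ▸ ratEnum.symm.injective.tendsto_cofinite.mono_left hl)
  have hcut : Tendsto cutSum l (𝓝 y) :=
    hy.congr_dist (squeeze_zero (fun _ => dist_nonneg) dist_gapPoint_cutSum_le hweight)
  set C : Set (ℕ → Bool) := {b | ∀ n, ratEnum n ≤ a → b n = true}
  have hC : IsClosed C := by
    simp only [C, ofPred_forall]
    exact isClosed_iInter fun n => isClosed_iInter fun _ =>
      isClosed_eq (continuous_apply n) continuous_const
  have hmem : ∀ q ∈ Ioi a, cutSum q ∈ lacunarySum '' C := fun q hq =>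
    ⟨_, fun n hn => decide_eq_true (hn.trans_lt hq), rfl⟩
  obtain ⟨b, hbC, rfl⟩ := (hC.isCompact.image continuous_lacunarySum).isClosed.mem_of_tendsto
    hcut (mem_of_superset (le_principal_iff.1 ha) hmem)
  exact irrational_lacunarySum ((Iic_infinite a).preimage (by simp) |>.mono hbC)

lemma disjoint_nhdsNE_image_gapPoint (a x : ℚ) :
    Disjoint (𝓝[≠] x) (𝓟 (gapPoint '' Ioi a)) := by
  by_contra h
  let l := comap gapPoint (𝓝[≠] x ⊓ 𝓟 (gapPoint '' Ioi a)) ⊓ 𝓟 (Ioi a)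
  have : l.NeBot := comap_inf_principal_neBot_of_image_mem
    (Filter.neBot_iff.2 (mt disjoint_iff.2 h)) (mem_inf_of_right (mem_principal_self _))
  have hlx : Tendsto gapPoint l (𝓝[≠] x) :=
    tendsto_comap.mono_left (inf_le_left.trans (comap_mono inf_le_left))
  have hcof : l ≤ cofinite := calc
    l ≤ comap gapPoint (𝓝[≠] x) := inf_le_left.trans (comap_mono inf_le_left)
    _ ≤ comap gapPoint cofinite := comap_mono (nhdsNE_le_cofinite x)
    _ = cofinite := strictMono_gapPoint.injective.comap_cofinite_eq
  exact Rat.not_irrational x <| irrational_of_tendsto_gapPoint hcof inf_le_right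
    ((Rat.continuous_coe_real.tendsto x).comp (hlx.mono_right nhdsWithin_le_nhds))

theorem exists_orderEmbedding_rat_disjoint_nhdsNE_range :
    ∃ E : ℚ ↪o ℚ, ∀ x, Disjoint (𝓝[≠] x) (𝓟 (range E)) := by
  let E : ℚ ↪o ℚ := (orderIsoIooNegOneOne ℚ).toOrderEmbedding.trans
    ((OrderEmbedding.subtype _).trans (OrderEmbedding.ofStrictMono _ strictMono_gapPoint))
  refine ⟨E, fun x => (disjoint_nhdsNE_image_gapPoint (-1) x).mono_right (principal_mono.2 ?_)⟩
  rintro _ ⟨q, rfl⟩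
  exact ⟨_, ((orderIsoIooNegOneOne ℚ) q).2.1, rfl⟩

end

/-- For every countable linear order `X`, there exists an order embedding
`f : X ↪o ℚ` whose image is a closed subset of `ℚ` (usual topology on `ℚ`). -/
theorem stmt_0 (X : Type*) [LinearOrder X] [Countable X] :
    ∃ f : X ↪o ℚ, IsClosed (Set.range f) := by
  obtain ⟨g⟩ := Order.embedding_from_countable_to_dense X ℚ
  obtain ⟨E, hE⟩ := exists_orderEmbedding_rat_disjoint_nhdsNE_range
  refine ⟨g.trans E, (isClosed_and_discrete_iff.2 fun x => (hE x).mono_right ?_).1⟩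
  exact principal_mono.2 (range_comp_subset_range g E)
end

section
/- For every closed subset C of ℚ, there exists an order automorphism φ of ℚ such that φ(q) = q for every q ∈ C and φ(q) > q for every q ∈ ℚ \ C. In particular, the fixed-point set of φ is exactly C. -/
/-!
The complement `U = ℚ \ C` is open, so each of its order-connected components is a nonempty
countable dense order without endpoints, hence order-isomorphic to `ℚ` by Cantor's theorem, and
therefore carries an automorphism moving every point up (conjugate `x ↦ x + 1`). Gluing these
automorphisms and the identity on `C` gives a strictly monotone surjection of `ℚ`: two points in
different components are separated by a point of `C`, which no component crosses.
-/

open Set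

theorem exists_orderIso_lt_self (α : Type*) [LinearOrder α] [Countable α] [DenselyOrdered α]
    [NoMinOrder α] [NoMaxOrder α] [Nonempty α] : ∃ f : α ≃o α, ∀ x, x < f x := by
  obtain ⟨e⟩ := Order.iso_of_countable_dense α ℚ
  refine ⟨(e.trans (OrderIso.addRight 1)).trans e.symm, fun x => ?_⟩
  simpa using e.lt_symm_apply.2 (lt_add_one (e x))

section Topology

variable {X : Type*} [LinearOrder X] [TopologicalSpace X] [OrderTopology X] [DenselyOrdered X]
  {U : Set X} {x : X}

theorem IsOpen.noMaxOrder_ordConnectedComponent [NoMaxOrder X] (hU : IsOpen U) :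
    NoMaxOrder (ordConnectedComponent U x) where
  exists_gt a := by
    have hcomp : ordConnectedComponent U a = ordConnectedComponent U x :=
      (ordConnectedComponent_eq (mem_ordConnectedComponent.1 a.2)).symm
    obtain ⟨b, hab, hb⟩ := Filter.Eventually.exists_gt (ordConnectedComponent_mem_nhds.2
      (hU.mem_nhds (ordConnectedComponent_subset a.2)))
    exact ⟨⟨b, hcomp ▸ hb⟩, hab⟩

theorem IsOpen.noMinOrder_ordConnectedComponent [NoMinOrder X] (hU : IsOpen U) :
    NoMinOrder (ordConnectedComponent U x) where
  exists_lt a := by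
    have hcomp : ordConnectedComponent U a = ordConnectedComponent U x :=
      (ordConnectedComponent_eq (mem_ordConnectedComponent.1 a.2)).symm
    obtain ⟨b, hab, hb⟩ := Filter.Eventually.exists_lt (ordConnectedComponent_mem_nhds.2
      (hU.mem_nhds (ordConnectedComponent_subset a.2)))
    exact ⟨⟨b, hcomp ▸ hb⟩, hab⟩

end Topology

section Componentwise

variable {α : Type*} [LinearOrder α] {U : Set α} {x y c q : α}

theorem lt_of_mem_ordConnectedComponent_of_lt (hy : y ∈ ordConnectedComponent U x) (hc : c ∉ U)
    (hxc : x < c) : y < c :=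
  not_le.1 fun hcy => hc (mem_ordConnectedComponent.1 hy (Icc_subset_uIcc ⟨hxc.le, hcy⟩))

theorem lt_of_mem_ordConnectedComponent_of_gt (hy : y ∈ ordConnectedComponent U x) (hc : c ∉ U)
    (hcx : c < x) : c < y :=
  not_le.1 fun hyc => hc (mem_ordConnectedComponent.1 hy (Icc_subset_uIcc' ⟨hyc, hcx.le⟩))

variable (U) (ψ : ∀ S : Set α, S ≃o S)

-- `ψ` is indexed by sets, not base points, so that all points of a component use the same `ψ S`.
noncomputable def componentwiseMap (q : α) : α :=
  open Classical in
  if h : q ∈ U then ψ (ordConnectedComponent U q) ⟨q, self_mem_ordConnectedComponent.2 h⟩ else q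

variable {U ψ}

theorem componentwiseMap_of_notMem (hq : q ∉ U) : componentwiseMap U ψ q = q := dif_neg hq

theorem componentwiseMap_of_mem_ordConnectedComponent (hq : q ∈ ordConnectedComponent U x) :
    componentwiseMap U ψ q = ψ (ordConnectedComponent U x) ⟨q, hq⟩ := by
  have hS : ordConnectedComponent U q = ordConnectedComponent U x :=
    (ordConnectedComponent_eq (mem_ordConnectedComponent.1 hq)).symm
  rw [componentwiseMap, dif_pos (ordConnectedComponent_subset hq)]
  generalize_proofs hq'
  revert hq'
  rw [hS]
  exact fun _ => rfl

theorem componentwiseMap_mem_ordConnectedComponent (hq : q ∈ ordConnectedComponent U x) :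
    componentwiseMap U ψ q ∈ ordConnectedComponent U x := by
  rw [componentwiseMap_of_mem_ordConnectedComponent hq]
  exact Subtype.prop _

theorem componentwiseMap_lt_of_lt (hc : c ∉ U) (hqc : q < c) : componentwiseMap U ψ q < c := by
  by_cases hq : q ∈ U
  · exact lt_of_mem_ordConnectedComponent_of_lt
      (componentwiseMap_mem_ordConnectedComponent (self_mem_ordConnectedComponent.2 hq)) hc hqc
  · rwa [componentwiseMap_of_notMem hq]

theorem lt_componentwiseMap_of_lt (hc : c ∉ U) (hcq : c < q) : c < componentwiseMap U ψ q := by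
  by_cases hq : q ∈ U
  · exact lt_of_mem_ordConnectedComponent_of_gt
      (componentwiseMap_mem_ordConnectedComponent (self_mem_ordConnectedComponent.2 hq)) hc hcq
  · rwa [componentwiseMap_of_notMem hq]

theorem le_componentwiseMap_of_le (hc : c ∉ U) (hcq : c ≤ q) : c ≤ componentwiseMap U ψ q := by
  rcases hcq.lt_or_eq with hcq | rfl
  · exact (lt_componentwiseMap_of_lt hc hcq).le
  · rw [componentwiseMap_of_notMem hc]

variable (U ψ)

theorem strictMono_componentwiseMap : StrictMono (componentwiseMap U ψ) := by
  intro x y hxy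
  by_cases hy : y ∈ ordConnectedComponent U x
  · have hx : x ∈ ordConnectedComponent U x :=
      self_mem_ordConnectedComponent.2 (nonempty_ordConnectedComponent.1 ⟨y, hy⟩)
    rw [componentwiseMap_of_mem_ordConnectedComponent hx,
      componentwiseMap_of_mem_ordConnectedComponent hy]
    exact (ψ _).strictMono hxy
  -- otherwise some point `c ∉ U` separates `x` from `y`, and the map cannot cross it
  obtain ⟨c, hc, hcU⟩ : ∃ c ∈ Icc x y, c ∉ U := by
    rwa [mem_ordConnectedComponent, uIcc_of_le hxy.le, not_subset] at hy
  rcases hc.1.lt_or_eq with hxc | rfl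
  · exact (componentwiseMap_lt_of_lt hcU hxc).trans_le (le_componentwiseMap_of_le hcU hc.2)
  · rw [componentwiseMap_of_notMem hcU]
    exact lt_componentwiseMap_of_lt hcU hxy

theorem surjective_componentwiseMap : Function.Surjective (componentwiseMap U ψ) := by
  intro z
  by_cases hz : z ∈ U
  · set w := (ψ (ordConnectedComponent U z)).symm ⟨z, self_mem_ordConnectedComponent.2 hz⟩
    refine ⟨w, ?_⟩
    rw [componentwiseMap_of_mem_ordConnectedComponent w.2, OrderIso.apply_symm_apply]
  · exact ⟨z, componentwiseMap_of_notMem hz⟩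

end Componentwise

theorem exists_orderIso_fix_compl_lt_of_ordConnectedComponent {α : Type*} [LinearOrder α]
    {U : Set α} (h : ∀ x ∈ U, ∃ f : ordConnectedComponent U x ≃o ordConnectedComponent U x,
      ∀ y, y < f y) :
    ∃ φ : α ≃o α, (∀ q ∉ U, φ q = q) ∧ ∀ q ∈ U, q < φ q := by
  classical
  have : ∀ S : Set α, ∃ f : S ≃o S, ∀ x ∈ U, S = ordConnectedComponent U x → ∀ y, y < f y := by
    intro S
    by_cases hS : ∃ x ∈ U, S = ordConnectedComponent U x
    · obtain ⟨x, hx, rfl⟩ := hS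
      obtain ⟨f, hf⟩ := h x hx
      exact ⟨f, fun _ _ _ => hf⟩
    · exact ⟨OrderIso.refl S, fun x hx hSx => (hS ⟨x, hx, hSx⟩).elim⟩
  choose ψ hψ using this
  refine ⟨StrictMono.orderIsoOfSurjective _ (strictMono_componentwiseMap U ψ)
    (surjective_componentwiseMap U ψ), fun q => componentwiseMap_of_notMem, fun q hq => ?_⟩
  have hq' := self_mem_ordConnectedComponent.2 hq
  change q < componentwiseMap U ψ q
  rw [componentwiseMap_of_mem_ordConnectedComponent hq']
  exact hψ _ q hq rfl ⟨q, hq'⟩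

/-- For every closed `C ⊆ ℚ` there is an order automorphism `φ` of `ℚ`
fixing every point of `C` and moving every point of `ℚ \ C` strictly upwards;
in particular the fixed-point set of `φ` is exactly `C`. -/
theorem stmt_2 (C : Set ℚ) (hC : IsClosed C) :
    ∃ φ : ℚ ≃o ℚ, (∀ q ∈ C, φ q = q) ∧ (∀ q ∉ C, q < φ q) ∧ {q : ℚ | φ q = q} = C := by
  obtain ⟨φ, hfix, hlt⟩ :=
    exists_orderIso_fix_compl_lt_of_ordConnectedComponent (U := Cᶜ) fun x hx => by
      have := hC.isOpen_compl.noMaxOrder_ordConnectedComponent (x := x)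
      have := hC.isOpen_compl.noMinOrder_ordConnectedComponent (x := x)
      have : Nonempty (ordConnectedComponent Cᶜ x) := ⟨⟨x, self_mem_ordConnectedComponent.2 hx⟩⟩
      exact exists_orderIso_lt_self _
  have hfixC : ∀ q ∈ C, φ q = q := fun q hq => hfix q (not_not_intro hq)
  refine ⟨φ, hfixC, hlt, Set.ext fun q => ⟨fun hq => ?_, hfixC q⟩⟩
  by_contra hqC
  exact (hlt q hqC).ne' hq
end

section
/- For every countable linear order X, there exists an order automorphism φ of ℚ such that the fixed-point set {q ∈ ℚ : φ(q) = q}, equipped with the order induced from ℚ, is order-isomorphic to X. -/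
/-!
Since `X ×ₗ ℚ` is countable, dense and without endpoints, Cantor's theorem identifies it with `ℚ`
when `X` is nonempty. Doubling the second coordinate is an order automorphism of `X ×ₗ ℚ` whose
fixed points are exactly the copy `X × {0}` of `X`; transport it to `ℚ`. For empty `X`, any
translation of `ℚ` works.
-/

namespace OrderIso

variable {α β : Type*} [Preorder α] [Preorder β]

def fixedPointsConj (ψ : α ≃o α) (e : α ≃o β) :
    {b // (e.symm.trans ψ).trans e b = b} ≃o {a // ψ a = a} where
  toEquiv := e.symm.toEquiv.subtypeEquiv fun b => by
    simp [e.symm.injective.eq_iff.symm]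
  map_rel_iff' := e.symm.le_iff_le

end OrderIso

namespace Prod.Lex

instance {α β : Type*} [Countable α] [Countable β] : Countable (α ×ₗ β) :=
  inferInstanceAs (Countable (α × β))

variable {α β : Type*} [LinearOrder α] [Preorder β]

noncomputable def fixedPointsCongrRight (f : β ≃o β) {b₀ : β} (hf : ∀ b, f b = b ↔ b = b₀) :
    {p : α ×ₗ β // prodLexCongr (OrderIso.refl α) f p = p} ≃o α :=
  OrderIso.symm <| StrictMono.orderIsoOfSurjective
    (fun a => ⟨toLex (a, b₀), by simp [(hf b₀).2 rfl]⟩)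
    (fun _ _ h => toLex_strictMono (Prod.mk_lt_mk_of_lt_of_le h le_rfl))
    (by
      rintro ⟨p, hp⟩
      have hb : f (ofLex p).2 = (ofLex p).2 := congrArg (fun p => (ofLex p).2) hp
      refine ⟨(ofLex p).1, Subtype.ext ?_⟩
      simp [← (hf _).1 hb])

end Prod.Lex

/-- For every countable linear order `X` there is an order automorphism
`φ` of `ℚ` whose fixed-point set, with the induced order, is order-isomorphic to `X`. -/
theorem stmt_3 (X : Type*) [LinearOrder X] [Countable X] :
    ∃ φ : ℚ ≃o ℚ, Nonempty ({q : ℚ // φ q = q} ≃o X) := by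
  cases isEmpty_or_nonempty X with
  | inl _ =>
    have : IsEmpty {q : ℚ // OrderIso.addRight 1 q = q} := ⟨fun ⟨q, hq⟩ => by simp at hq⟩
    exact ⟨OrderIso.addRight 1, ⟨OrderIso.ofIsEmpty _ _⟩⟩
  | inr _ =>
    obtain ⟨e⟩ : Nonempty (X ×ₗ ℚ ≃o ℚ) := Order.iso_of_countable_dense _ _
    let ψ := Prod.Lex.prodLexCongr (OrderIso.refl X) (OrderIso.mulLeft₀ (2 : ℚ) two_pos)
    have hdouble (q : ℚ) : OrderIso.mulLeft₀ (2 : ℚ) two_pos q = q ↔ q = 0 := by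
      rw [OrderIso.mulLeft₀_apply, two_mul, add_eq_right]
    exact ⟨(e.symm.trans ψ).trans e,
      ⟨(OrderIso.fixedPointsConj ψ e).trans (Prod.Lex.fixedPointsCongrRight _ hdouble)⟩⟩
end

section
/- Let φ and ψ be order automorphisms of ℚ. Suppose there exists a bijection F between the set of orbitals of φ and the set of orbitals of ψ such that: (i) F is order-preserving (if orbital O₁ lies entirely below orbital O₂ then F(O₁) lies entirely below F(O₂)); and (ii) F is parity-preserving (F sends singleton fixed-point orbitals to singleton fixed-point orbitals, orbitals on which φ(r) > r to orbitals on which ψ(r) > r, and orbitals on which φ(r) < r to orbitals on which ψ(r) < r). Then φ and ψ are conjugate in Aut(ℚ): there exists an order automorphism β of ℚ with β ∘ φ = ψ ∘ β. -/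
/-!
Each orbital of an order automorphism is a fixed point, an up-bump or a down-bump. On an
up-bump of `φ` containing `q`, the translates `φ^k '' [q, φ q)`, `k ∈ ℤ`, tile the orbital, so
an order automorphism `e` of `ℚ` with `e q = q'` and `e (φ q) = ψ q'` (an affine map) extends to
the conjugacy `φ^k y ↦ ψ^k (e y)` onto the up-bump of `ψ` containing `q'`. Down-bumps reduce to
up-bumps of the inverses, and fixed points are trivial. Since `F` preserves the order of the
orbitals, these orbitalwise conjugacies glue to an order automorphism of `ℚ`.
-/

open Set

/-- The orbital of an order automorphism `φ` of `ℚ` containing `q`: the order-convex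
hull of the ℤ-orbit `{φ^n q : n ∈ ℤ}`. -/
def orbital (φ : ℚ ≃o ℚ) (q : ℚ) : Set ℚ :=
  {r : ℚ | ∃ m n : ℤ, (φ.toEquiv ^ m) q ≤ r ∧ r ≤ (φ.toEquiv ^ n) q}

/-- The set of orbitals of `φ`. -/
def Orbitals (φ : ℚ ≃o ℚ) : Set (Set ℚ) :=
  {O : Set ℚ | ∃ q : ℚ, O = orbital φ q}

/-- `A` lies entirely below `B`. -/
def Below (A B : Set ℚ) : Prop := ∀ a ∈ A, ∀ b ∈ B, a < b

section Iterates

variable {α : Type*}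

lemma OrderIso.zpow_toEquiv [Preorder α] (φ : α ≃o α) (n : ℤ) :
    (φ ^ n).toEquiv = φ.toEquiv ^ n :=
  map_zpow (⟨⟨RelIso.toEquiv, rfl⟩, fun _ _ => rfl⟩ : (α ≃o α) →* Equiv.Perm α) φ n

variable [LinearOrder α] (φ : α ≃o α) {x y z r : α}

lemma strictMono_zpow_apply (hx : x < φ x) : StrictMono fun n : ℤ => (φ ^ n) x :=
  strictMono_int_of_lt_succ fun n => by
    rw [zpow_add_one, RelIso.mul_apply]
    exact (φ ^ n).strictMono hx

lemma zpow_apply_lt_zpow_apply (hy : y ∈ Ico x (φ x)) (hz : x ≤ z) {a b : ℤ} (hab : a < b) :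
    (φ ^ a) y < (φ ^ b) z :=
  calc (φ ^ a) y < (φ ^ a) (φ x) := (φ ^ a).strictMono hy.2
    _ = (φ ^ (a + 1)) x := by rw [zpow_add_one, RelIso.mul_apply]
    _ ≤ (φ ^ b) x := (strictMono_zpow_apply φ (hy.1.trans_lt hy.2)).monotone hab
    _ ≤ (φ ^ b) z := (φ ^ b).monotone hz

lemma eq_zero_of_zpow_apply_mem_Ico (hy : y ∈ Ico x (φ x)) {k : ℤ}
    (hk : (φ ^ k) y ∈ Ico x (φ x)) : k = 0 := by
  rcases lt_trichotomy k 0 with hk0 | hk0 | hk0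
  · simpa using zpow_apply_lt_zpow_apply φ hy hk.1 hk0
  · exact hk0
  · simpa using zpow_apply_lt_zpow_apply φ hk hy.1 hk0

lemma exists_zpow_apply_eq (hx : x < φ x) {m n : ℤ} (hm : (φ ^ m) x ≤ r) (hn : r ≤ (φ ^ n) x) :
    ∃ k : ℤ, ∃ y ∈ Ico x (φ x), (φ ^ k) y = r := by
  obtain ⟨k, hk, hmax⟩ := Int.exists_greatest_of_bdd (P := fun k => (φ ^ k) x ≤ r)
    ⟨n, fun k hk => (strictMono_zpow_apply φ hx).le_iff_le.1 (hk.trans hn)⟩ ⟨m, hm⟩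
  refine ⟨k, (φ ^ k).symm r, ⟨(φ ^ k).le_symm_apply.2 hk, (φ ^ k).symm_apply_lt.2 ?_⟩,
    (φ ^ k).apply_symm_apply r⟩
  rw [← RelIso.mul_apply, ← zpow_add_one]
  exact not_le.1 fun h => (hmax (k + 1) h).not_gt (lt_add_one k)

end Iterates

section Orbital

variable {φ : ℚ ≃o ℚ} {q r s : ℚ}

lemma mem_orbital : r ∈ orbital φ q ↔ ∃ m n : ℤ, (φ ^ m) q ≤ r ∧ r ≤ (φ ^ n) q := by
  simp only [orbital, ← OrderIso.zpow_toEquiv]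
  rfl

variable (φ q) in
lemma mem_orbital_self : q ∈ orbital φ q :=
  mem_orbital.2 ⟨0, 0, le_rfl, le_rfl⟩

lemma zpow_apply_mem_orbital (hr : r ∈ orbital φ q) (k : ℤ) : (φ ^ k) r ∈ orbital φ q := by
  obtain ⟨m, n, hm, hn⟩ := mem_orbital.1 hr
  refine mem_orbital.2 ⟨k + m, k + n, ?_, ?_⟩ <;> rw [zpow_add, RelIso.mul_apply]
  exacts [(φ ^ k).monotone hm, (φ ^ k).monotone hn]

lemma apply_mem_orbital (hr : r ∈ orbital φ q) : φ r ∈ orbital φ q := by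
  simpa using zpow_apply_mem_orbital hr 1

lemma mem_orbital_comm (hr : r ∈ orbital φ q) : q ∈ orbital φ r := by
  obtain ⟨m, n, hm, hn⟩ := mem_orbital.1 hr
  refine mem_orbital.2 ⟨-n, -m, ?_, ?_⟩ <;> rw [zpow_neg]
  exacts [(φ ^ n).symm_apply_le.2 hn, (φ ^ m).le_symm_apply.2 hm]

lemma orbital_subset_of_mem (hr : r ∈ orbital φ q) : orbital φ r ⊆ orbital φ q := by
  obtain ⟨m, n, hm, hn⟩ := mem_orbital.1 hr
  intro s hs
  obtain ⟨a, b, ha, hb⟩ := mem_orbital.1 hs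
  refine mem_orbital.2 ⟨a + m, b + n, ?_, ?_⟩ <;> rw [zpow_add, RelIso.mul_apply]
  exacts [((φ ^ a).monotone hm).trans ha, hb.trans ((φ ^ b).monotone hn)]

lemma orbital_eq_of_mem (hr : r ∈ orbital φ q) : orbital φ r = orbital φ q :=
  (orbital_subset_of_mem hr).antisymm (orbital_subset_of_mem (mem_orbital_comm hr))

variable (φ q) in
lemma ordConnected_orbital : (orbital φ q).OrdConnected :=
  ⟨fun a ha b hb r hr => by
    obtain ⟨m, -, hm, -⟩ := mem_orbital.1 ha
    obtain ⟨-, n, -, hn⟩ := mem_orbital.1 hb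
    exact mem_orbital.2 ⟨m, n, hm.trans hr.1, hr.2.trans hn⟩⟩

variable (φ q) in
lemma orbital_inv : orbital φ⁻¹ q = orbital φ q := by
  ext r
  simp only [mem_orbital, inv_zpow']
  exact ⟨fun ⟨m, n, h⟩ => ⟨-m, -n, h⟩, fun ⟨m, n, h⟩ => ⟨-m, -n, by simpa using h⟩⟩

lemma orbital_eq_singleton (h : φ q = q) : orbital φ q = {q} := by
  have hfix : ∀ n : ℤ, (φ.toEquiv ^ n) q = q :=
    Equiv.Perm.zpow_apply_eq_self_of_apply_eq_self h
  ext r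
  simp only [orbital, hfix, mem_ofPred_eq, mem_singleton_iff, exists_const]
  exact ⟨fun h => le_antisymm h.2 h.1, fun h => ⟨h.ge, h.le⟩⟩

lemma mem_orbital_iff_exists_zpow_apply (hq : q < φ q) :
    r ∈ orbital φ q ↔ ∃ k : ℤ, ∃ y ∈ Ico q (φ q), (φ ^ k) y = r := by
  refine ⟨fun hr => ?_, ?_⟩
  · obtain ⟨m, n, hm, hn⟩ := mem_orbital.1 hr
    exact exists_zpow_apply_eq φ hq hm hn
  · rintro ⟨k, y, hy, rfl⟩
    refine zpow_apply_mem_orbital ((ordConnected_orbital φ q).out (mem_orbital_self φ q)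
      (apply_mem_orbital (mem_orbital_self φ q)) (Ico_subset_Icc_self hy)) k

lemma lt_apply_of_mem_orbital (hq : q < φ q) (hr : r ∈ orbital φ q) : r < φ r := by
  obtain ⟨k, y, hy, rfl⟩ := (mem_orbital_iff_exists_zpow_apply hq).1 hr
  have : φ ((φ ^ k) y) = (φ ^ (1 + k)) y := by rw [zpow_one_add, RelIso.mul_apply]
  rw [this]
  exact zpow_apply_lt_zpow_apply φ hy hy.1 (lt_one_add k)

lemma apply_lt_of_mem_orbital (hq : φ q < q) (hr : r ∈ orbital φ q) : φ r < r :=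
  φ.lt_symm_apply.1 <|
    lt_apply_of_mem_orbital (φ := φ⁻¹) (φ.lt_symm_apply.2 hq) ((orbital_inv φ q).symm ▸ hr)

lemma below_orbital_of_not_mem (hrs : r < s) (hs : s ∉ orbital φ r) :
    Below (orbital φ r) (orbital φ s) := by
  intro a ha b hb
  by_contra! hba
  rcases le_or_gt s a with hsa | has
  · exact hs ((ordConnected_orbital φ r).out (mem_orbital_self φ r) ha ⟨hrs.le, hsa⟩)
  · have : a ∈ orbital φ s :=
      (ordConnected_orbital φ s).out hb (mem_orbital_self φ s) ⟨hba, has.le⟩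
    exact hs (orbital_eq_of_mem ha ▸ mem_orbital_comm this)

end Orbital

section Conjugacy

variable {α β : Type*}

structure IsConjugacyOn [Preorder α] [Preorder β] (φ : α ≃o α) (ψ : β ≃o β) (f : α → β)
    (s : Set α) (t : Set β) : Prop where
  strictMonoOn : StrictMonoOn f s
  mapsTo : MapsTo f s t
  surjOn : SurjOn f s t
  semiconj : ∀ x ∈ s, f (φ x) = ψ (f x)

lemma IsConjugacyOn.of_inv [Preorder α] [Preorder β] {φ : α ≃o α} {ψ : β ≃o β} {f : α → β}
    {s : Set α} {t : Set β} (h : IsConjugacyOn φ⁻¹ ψ⁻¹ f s t) (hs : MapsTo φ s s) :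
    IsConjugacyOn φ ψ f s t where
  strictMonoOn := h.strictMonoOn
  mapsTo := h.mapsTo
  surjOn := h.surjOn
  semiconj x hx := by
    have := h.semiconj (φ x) (hs hx)
    rw [RelIso.inv_apply_self] at this
    rw [this, RelIso.apply_inv_self]

open Classical in
/-- `ψ^k ∘ e ∘ φ^(-k)` on the translate `φ^k '' [x, φ x)`; the `else` branch is junk. -/
noncomputable def bumpConj [Preorder α] [Preorder β] (φ : α ≃o α) (ψ : β ≃o β) (e : α → β)
    (x r : α) : β :=
  if h : ∃ k : ℤ, (φ ^ (-k)) r ∈ Ico x (φ x) then (ψ ^ h.choose) (e ((φ ^ (-h.choose)) r))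
  else e r

lemma bumpConj_zpow_apply [LinearOrder α] [Preorder β] {φ : α ≃o α} {ψ : β ≃o β} {e : α → β}
    {x y : α} (hy : y ∈ Ico x (φ x)) (k : ℤ) :
    bumpConj φ ψ e x ((φ ^ k) y) = (ψ ^ k) (e y) := by
  have hk : (φ ^ (-k)) ((φ ^ k) y) = y := by rw [zpow_neg, RelIso.inv_apply_self]
  have hex : ∃ j : ℤ, (φ ^ (-j)) ((φ ^ k) y) ∈ Ico x (φ x) := ⟨k, hk.symm ▸ hy⟩
  have hj : hex.choose = k := by
    have := hex.choose_spec
    rw [← RelIso.mul_apply, ← zpow_add] at this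
    linarith [eq_zero_of_zpow_apply_mem_Ico φ hy this]
  rw [bumpConj, dif_pos hex, hj, hk]

end Conjugacy

lemma exists_orderIso_apply_eq_apply_eq {K : Type*} [Field K] [LinearOrder K]
    [IsStrictOrderedRing K] {a b c d : K} (hab : a < b) (hcd : c < d) :
    ∃ e : K ≃o K, e a = c ∧ e b = d := by
  have hpos : 0 < (d - c) / (b - a) := div_pos (sub_pos.2 hcd) (sub_pos.2 hab)
  refine ⟨(OrderIso.addRight (-a)).trans ((OrderIso.mulLeft₀ _ hpos).trans (OrderIso.addRight c)),
    ?_, ?_⟩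
  · simp
  · simp [← sub_eq_add_neg, (sub_pos.2 hab).ne']

section OrbitalConjugacy

variable {φ ψ : ℚ ≃o ℚ}

lemma isConjugacyOn_const_orbital {q q' : ℚ} (hq : φ q = q) (hq' : ψ q' = q') :
    IsConjugacyOn φ ψ (fun _ => q') (orbital φ q) (orbital ψ q') := by
  rw [orbital_eq_singleton hq, orbital_eq_singleton hq']
  exact ⟨strictMonoOn_singleton _, mapsTo_singleton.2 rfl, surjOn_singleton.2 ⟨q, rfl, rfl⟩,
    fun _ _ => hq'.symm⟩

lemma isConjugacyOn_bumpConj {e : ℚ ≃o ℚ} {q : ℚ} (hq : q < φ q) (he : e (φ q) = ψ (e q)) :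
    IsConjugacyOn φ ψ (bumpConj φ ψ e q) (orbital φ q) (orbital ψ (e q)) := by
  have hq' : e q < ψ (e q) := he ▸ e.strictMono hq
  have he_mem : MapsTo e (Ico q (φ q)) (Ico (e q) (ψ (e q))) :=
    fun y hy => he ▸ ⟨e.monotone hy.1, e.strictMono hy.2⟩
  have hφ := fun r => mem_orbital_iff_exists_zpow_apply (r := r) hq
  have hψ := fun r => mem_orbital_iff_exists_zpow_apply (r := r) hq'
  refine ⟨?_, ?_, ?_, ?_⟩
  · intro r hr s hs hrs
    obtain ⟨a, y, hy, rfl⟩ := (hφ r).1 hr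
    obtain ⟨b, z, hz, rfl⟩ := (hφ s).1 hs
    rw [bumpConj_zpow_apply hy, bumpConj_zpow_apply hz]
    rcases lt_trichotomy a b with hab | rfl | hab
    · exact zpow_apply_lt_zpow_apply ψ (he_mem hy) (he_mem hz).1 hab
    · exact (ψ ^ a).strictMono (e.strictMono ((φ ^ a).lt_iff_lt.1 hrs))
    · exact absurd hrs (zpow_apply_lt_zpow_apply φ hz hy.1 hab).not_gt
  · intro r hr
    obtain ⟨k, y, hy, rfl⟩ := (hφ r).1 hr
    rw [bumpConj_zpow_apply hy]
    exact (hψ _).2 ⟨k, e y, he_mem hy, rfl⟩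
  · intro r hr
    obtain ⟨k, w, hw, rfl⟩ := (hψ r).1 hr
    have hy : e.symm w ∈ Ico q (φ q) :=
      ⟨e.le_symm_apply.2 hw.1, e.symm_apply_lt.2 (he ▸ hw.2)⟩
    exact ⟨(φ ^ k) (e.symm w), (hφ _).2 ⟨k, _, hy, rfl⟩,
      by rw [bumpConj_zpow_apply hy, e.apply_symm_apply]⟩
  · intro r hr
    obtain ⟨k, y, hy, rfl⟩ := (hφ r).1 hr
    rw [← RelIso.mul_apply φ, ← zpow_one_add, bumpConj_zpow_apply hy, bumpConj_zpow_apply hy,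
      zpow_one_add, RelIso.mul_apply]

lemma exists_isConjugacyOn_orbital {q q' : ℚ} (h : compare q (φ q) = compare q' (ψ q')) :
    ∃ f : ℚ → ℚ, IsConjugacyOn φ ψ f (orbital φ q) (orbital ψ q') := by
  rcases lt_trichotomy q (φ q) with hq | hq | hq
  · obtain ⟨e, rfl, he⟩ := exists_orderIso_apply_eq_apply_eq hq
      (compare_lt_iff_lt.1 (h ▸ compare_lt_iff_lt.2 hq))
    exact ⟨_, isConjugacyOn_bumpConj hq he⟩
  · exact ⟨_, isConjugacyOn_const_orbital hq.symm
      (compare_eq_iff_eq.1 (h ▸ compare_eq_iff_eq.2 hq)).symm⟩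
  · have hq' : ψ q' < q' := compare_gt_iff_gt.1 (h ▸ compare_gt_iff_gt.2 hq)
    obtain ⟨e, rfl, he⟩ :=
      exists_orderIso_apply_eq_apply_eq (φ.lt_symm_apply.2 hq) (ψ.lt_symm_apply.2 hq')
    have := isConjugacyOn_bumpConj (φ := φ⁻¹) (ψ := ψ⁻¹) (φ.lt_symm_apply.2 hq) he
    rw [orbital_inv, orbital_inv] at this
    exact ⟨_, this.of_inv fun _ => apply_mem_orbital⟩

def Orbitals.mk (φ : ℚ ≃o ℚ) (r : ℚ) : Orbitals φ := ⟨orbital φ r, r, rfl⟩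

lemma Orbitals.mk_eq_of_mem {O : Orbitals φ} {r : ℚ} (hr : r ∈ (O : Set ℚ)) :
    Orbitals.mk φ r = O := by
  obtain ⟨q, hq⟩ := O.2
  exact Subtype.ext (hq ▸ orbital_eq_of_mem (hq ▸ hr))

theorem exists_orderIso_semiconj_of_isConjugacyOn (F : Orbitals φ ≃ Orbitals ψ)
    (hord : ∀ O₁ O₂ : Orbitals φ, Below (O₁ : Set ℚ) (O₂ : Set ℚ) →
      Below (F O₁ : Set ℚ) (F O₂ : Set ℚ))
    (hconj : ∀ O : Orbitals φ, ∃ f : ℚ → ℚ, IsConjugacyOn φ ψ f O (F O)) :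
    ∃ β : ℚ ≃o ℚ, ∀ q : ℚ, β (φ q) = ψ (β q) := by
  choose f hf using hconj
  set g : ℚ → ℚ := fun r => f (Orbitals.mk φ r) r
  have hg : ∀ O : Orbitals φ, ∀ r ∈ (O : Set ℚ), g r = f O r := fun O r hr => by
    simp only [g, Orbitals.mk_eq_of_mem hr]
  have hmem : ∀ r, r ∈ (Orbitals.mk φ r : Set ℚ) := mem_orbital_self φ
  have hg_mono : StrictMono g := by
    intro r s hrs
    by_cases hs : s ∈ orbital φ r
    · rw [hg (Orbitals.mk φ r) s hs]
      exact (hf _).strictMonoOn (hmem r) hs hrs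
    · exact hord _ _ (below_orbital_of_not_mem hrs hs) _ ((hf _).mapsTo (hmem r)) _
        ((hf _).mapsTo (hmem s))
  have hg_surj : Function.Surjective g := by
    intro y
    have hy : y ∈ (F (F.symm (Orbitals.mk ψ y)) : Set ℚ) := by
      rw [F.apply_symm_apply]; exact mem_orbital_self ψ y
    obtain ⟨r, hr, hfr⟩ := (hf _).surjOn hy
    exact ⟨r, (hg _ r hr).trans hfr⟩
  refine ⟨hg_mono.orderIsoOfSurjective g hg_surj, fun r => ?_⟩
  change g (φ r) = ψ (g r)
  rw [hg (Orbitals.mk φ r) (φ r) (apply_mem_orbital (hmem r))]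
  exact (hf _).semiconj r (hmem r)

end OrbitalConjugacy

/-- If there is an order- and parity-preserving bijection between the
orbitals of `φ` and the orbitals of `ψ`, then `φ` and `ψ` are conjugate in `Aut(ℚ)`. -/
theorem stmt_6 (φ ψ : ℚ ≃o ℚ) (F : Orbitals φ ≃ Orbitals ψ)
    (hord : ∀ O₁ O₂ : Orbitals φ, Below (O₁ : Set ℚ) (O₂ : Set ℚ) →
      Below (F O₁ : Set ℚ) (F O₂ : Set ℚ))
    (hfix : ∀ O : Orbitals φ, (∃ q : ℚ, (O : Set ℚ) = {q} ∧ φ q = q) →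
      ∃ q : ℚ, (F O : Set ℚ) = {q} ∧ ψ q = q)
    (hup : ∀ O : Orbitals φ, (∀ r ∈ (O : Set ℚ), r < φ r) →
      ∀ r ∈ (F O : Set ℚ), r < ψ r)
    (hdown : ∀ O : Orbitals φ, (∀ r ∈ (O : Set ℚ), φ r < r) →
      ∀ r ∈ (F O : Set ℚ), ψ r < r) :
    ∃ β : ℚ ≃o ℚ, ∀ q : ℚ, β (φ q) = ψ (β q) := by
  refine exists_orderIso_semiconj_of_isConjugacyOn F hord fun O => ?_
  obtain ⟨q, hO⟩ := O.2
  obtain ⟨q', hFO⟩ := (F O).2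
  have hq' : q' ∈ (F O : Set ℚ) := hFO ▸ mem_orbital_self ψ q'
  rw [hO, hFO]
  refine exists_isConjugacyOn_orbital ?_
  rcases lt_trichotomy q (φ q) with hq | hq | hq
  · rw [compare_lt_iff_lt.2 hq, eq_comm, compare_lt_iff_lt]
    exact hup O (hO ▸ fun r => lt_apply_of_mem_orbital hq) q' hq'
  · obtain ⟨p, hp, hψp⟩ := hfix O ⟨q, hO.trans (orbital_eq_singleton hq.symm), hq.symm⟩
    rw [hp, mem_singleton_iff] at hq'
    rw [compare_eq_iff_eq.2 hq, eq_comm, compare_eq_iff_eq, hq', hψp]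
  · rw [compare_gt_iff_gt.2 hq, eq_comm, compare_gt_iff_gt]
    exact hdown O (hO ▸ fun r => apply_lt_of_mem_orbital hq) q' hq'
end

section
/- There exists a function assigning to every linear order R on ℕ an order automorphism φ_R of ℚ such that for all linear orders R and S on ℕ: (ℕ, R) is order-isomorphic to (ℕ, S) if and only if φ_R and φ_S are conjugate in Aut(ℚ). Moreover the assignment can be chosen so that the fixed-point set of φ_R, with the order induced from ℚ, is order-isomorphic to (ℕ, R). -/
/-!
Order ℕ × ℚ lexicographically by `R` on the first coordinate. This is a countable dense linear
order without endpoints, hence isomorphic to ℚ by Cantor's theorem, and doubling the second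
coordinate is an automorphism whose fixed points `(n, 0)` form a copy of `(ℕ, R)`. Conjugate
automorphisms have isomorphic fixed-point sets, which gives one direction of the equivalence;
for the other, choose `φ_R` through a fixed representative of the isomorphism class of `R`, so
that isomorphic orders receive the same automorphism.
-/

open Function

variable {α β : Type*}

noncomputable abbrev linearOrderOfIsLinearOrder (r : α → α → Prop) [IsLinearOrder α r] :
    LinearOrder α where
  le := r
  le_refl := refl_of r
  le_trans _ _ _ := trans_of r
  le_antisymm _ _ := antisymm_of r
  le_total := total_of r
  toDecidableLE := Classical.decRel r

def relIsoSetoid (α : Type*) : Setoid (α → α → Prop) where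
  r r s := Nonempty (r ≃r s)
  iseqv := ⟨fun r => ⟨.refl r⟩, fun ⟨e⟩ => ⟨e.symm⟩, fun ⟨e⟩ ⟨e'⟩ => ⟨e.trans e'⟩⟩

def Function.Semiconj.orderIsoFixedPoints [LE α] [LE β] {e : α ≃o β} {f : α → α} {g : β → β}
    (h : Semiconj e f g) : {x // f x = x} ≃o {y // g y = y} where
  toEquiv := e.toEquiv.subtypeEquiv fun x => by
    show f x = x ↔ g (e x) = e x
    rw [← h.eq x, e.apply_eq_iff_eq]
  map_rel_iff' := e.le_iff_le

theorem Prod.Lex.prodLexCongr_refl_apply_eq_self_iff [Preorder α] [Preorder β] (ψ : β ≃o β)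
    (x : α ×ₗ β) : prodLexCongr (OrderIso.refl α) ψ x = x ↔ ψ (ofLex x).2 = (ofLex x).2 := by
  induction x with | h x
  simp [Prod.ext_iff]

def Prod.Lex.fixedPointsProdLexCongrOrderIso [PartialOrder α] [Preorder β] (ψ : β ≃o β) (b : β)
    (hψ : ∀ y, ψ y = y ↔ y = b) :
    {x : α ×ₗ β // prodLexCongr (OrderIso.refl α) ψ x = x} ≃o α :=
  have snd_eq {x} (hx : prodLexCongr (OrderIso.refl α) ψ x = x) : (ofLex x).2 = b :=
    (hψ _).1 ((prodLexCongr_refl_apply_eq_self_iff ψ x).1 hx)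
  { toFun x := (ofLex x.1).1
    invFun a := ⟨toLex (a, b), by simp [(hψ b).2 rfl]⟩
    left_inv x := Subtype.ext <| by
      change toLex ((ofLex x.1).1, b) = x.1
      rw [← snd_eq x.2]
      rfl
    right_inv _ := rfl
    map_rel_iff' {x y} := by
      change (ofLex x.1).1 ≤ (ofLex y.1).1 ↔ x.1 ≤ y.1
      rw [Prod.Lex.le_iff, snd_eq x.2, snd_eq y.2, and_iff_left le_rfl, le_iff_lt_or_eq] }

theorem exists_rat_orderIso_fixedPoints_orderIso (α : Type*) [LinearOrder α] [Countable α]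
    [Nonempty α] : ∃ φ : ℚ ≃o ℚ, Nonempty ({q // φ q = q} ≃o α) := by
  have : Countable (α ×ₗ ℚ) := inferInstanceAs (Countable (α × ℚ))
  have : Nonempty (α ×ₗ ℚ) := inferInstanceAs (Nonempty (α × ℚ))
  obtain ⟨e⟩ := Order.iso_of_countable_dense (α ×ₗ ℚ) ℚ
  let σ := Prod.Lex.prodLexCongr (OrderIso.refl α) (OrderIso.mulLeft₀ (2 : ℚ) two_pos)
  have hσ : Semiconj e.symm (e.symm.trans (σ.trans e)) σ := fun q => by simp
  refine ⟨_, ⟨hσ.orderIsoFixedPoints.trans (Prod.Lex.fixedPointsProdLexCongrOrderIso _ 0 ?_)⟩⟩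
  intro q
  simp only [OrderIso.mulLeft₀_apply]
  constructor <;> intro <;> linarith

theorem exists_rat_orderIso_fixedPoints_relIso [Countable α] [Nonempty α] (r : α → α → Prop)
    [IsLinearOrder α r] :
    ∃ φ : ℚ ≃o ℚ, Nonempty ((fun a b : {q : ℚ // φ q = q} => (a : ℚ) ≤ (b : ℚ)) ≃r r) :=
  letI := linearOrderOfIsLinearOrder r
  exists_rat_orderIso_fixedPoints_orderIso α

/-- There is an assignment `R ↦ φ_R` of order automorphisms of `ℚ` to
linear orders `R` on `ℕ` such that `(ℕ, R) ≅ (ℕ, S)` iff `φ_R` and `φ_S` are conjugate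
in `Aut(ℚ)`, and moreover the fixed-point set of `φ_R` (with the induced order) is
order-isomorphic to `(ℕ, R)`. -/
theorem stmt_8 :
    ∃ f : (ℕ → ℕ → Prop) → (ℚ ≃o ℚ),
      (∀ R S : ℕ → ℕ → Prop, IsLinearOrder ℕ R → IsLinearOrder ℕ S →
        (Nonempty (R ≃r S) ↔ ∃ β : ℚ ≃o ℚ, ∀ q : ℚ, β ((f R) q) = (f S) (β q))) ∧
      (∀ R : ℕ → ℕ → Prop, IsLinearOrder ℕ R →
        Nonempty ((fun a b : {q : ℚ // (f R) q = q} => (a : ℚ) ≤ (b : ℚ)) ≃r R)) := by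
  have hΦ (R : ℕ → ℕ → Prop) : ∃ φ : ℚ ≃o ℚ, IsLinearOrder ℕ R →
      Nonempty ((fun a b : {q : ℚ // φ q = q} => (a : ℚ) ≤ (b : ℚ)) ≃r R) := by
    by_cases hR : IsLinearOrder ℕ R
    · obtain ⟨φ, hφ⟩ := exists_rat_orderIso_fixedPoints_relIso R
      exact ⟨φ, fun _ => hφ⟩
    · exact ⟨.refl ℚ, fun h => absurd h hR⟩
  choose Φ hΦ using hΦ
  let f R := Φ (Quotient.mk (relIsoSetoid ℕ) R).out
  have hf (R) (hR : IsLinearOrder ℕ R) :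
      Nonempty ((fun a b : {q : ℚ // f R q = q} => (a : ℚ) ≤ (b : ℚ)) ≃r R) := by
    obtain ⟨j⟩ := Quotient.mk_out (s := relIsoSetoid ℕ) R
    obtain ⟨k⟩ := hΦ _ j.toRelEmbedding.isLinearOrder
    exact ⟨k.trans j⟩
  refine ⟨f, fun R S hR hS => ⟨fun hRS => ⟨.refl ℚ, fun q => ?_⟩, fun ⟨β, hβ⟩ => ?_⟩, hf⟩
  · simp only [f, Quotient.sound (s := relIsoSetoid ℕ) hRS, OrderIso.refl_apply]
  · obtain ⟨kR⟩ := hf R hR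
    obtain ⟨kS⟩ := hf S hS
    exact ⟨kR.symm.trans (RelIso.trans (Semiconj.orderIsoFixedPoints hβ) kS)⟩
end

section
/- Any two countably infinite simple graphs each satisfying the extension property are isomorphic as graphs. (In particular, any countably infinite simple graph with the extension property is isomorphic to the random graph.) -/
/-!
Back and forth. Call a set of pairs `s ⊆ V × W` a partial isomorphism if it is the graph of a
bijection between its projections that preserves adjacency in both directions. A finite partial
isomorphism can always be extended to any prescribed vertex `v` of `V`: the extension property of
`H`, applied to the images of the neighbours and of the non-neighbours of `v` in the domain, yields
a fresh partner for `v`; symmetrically for `W`. Enumerating `V ⊕ W`, the Rasiowa–Sikorski sequence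
of finite partial isomorphisms meets all these cofinal families, and its union is an isomorphism.
-/

/-- A simple graph satisfies the extension property (the defining homogeneity property
of the random graph) if for any disjoint finite sets `U, W` of vertices there is a
vertex outside `U ∪ W` adjacent to every vertex of `U` and to no vertex of `W`. -/
def ExtensionProperty {V : Type*} (G : SimpleGraph V) : Prop :=
  ∀ U W : Finset V, Disjoint U W →
    ∃ x, x ∉ U ∧ x ∉ W ∧ (∀ u ∈ U, G.Adj x u) ∧ (∀ w ∈ W, ¬ G.Adj x w)

section BackAndForth

open Set

variable {V W : Type*} {G : SimpleGraph V} {H : SimpleGraph W}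

lemma ExtensionProperty.exists_of_finite (hG : ExtensionProperty G) {U U' : Set V}
    (hU : U.Finite) (hU' : U'.Finite) (hUU' : Disjoint U U') :
    ∃ x, x ∉ U ∧ x ∉ U' ∧ (∀ u ∈ U, G.Adj x u) ∧ ∀ u ∈ U', ¬ G.Adj x u := by
  simpa using hG hU.toFinset hU'.toFinset (by simpa using hUU')

namespace SimpleGraph

def IsPartialIso (G : SimpleGraph V) (H : SimpleGraph W) (s : Set (V × W)) : Prop :=
  ∀ p ∈ s, ∀ q ∈ s, (p.1 = q.1 ↔ p.2 = q.2) ∧ (G.Adj p.1 q.1 ↔ H.Adj p.2 q.2)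

namespace IsPartialIso

variable {s : Set (V × W)}

lemma swap (h : IsPartialIso G H s) : IsPartialIso H G (Prod.swap ⁻¹' s) :=
  fun _ hp _ hq ↦ (h _ hp _ hq).imp Iff.symm Iff.symm

lemma insert (h : IsPartialIso G H s) {v : V} {w : W}
    (hvw : ∀ p ∈ s, (v = p.1 ↔ w = p.2) ∧ (G.Adj v p.1 ↔ H.Adj w p.2)) :
    IsPartialIso G H (insert (v, w) s) := by
  rintro p (rfl | hp) q (rfl | hq)
  · simp
  · exact hvw q hq
  · exact (hvw p hp).imp (by simp only [eq_comm, imp_self]) (by simp only [adj_comm, imp_self])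
  · exact h p hp q hq

lemma iUnion_of_directed {ι : Type*} {s : ι → Set (V × W)} (hdir : Directed (· ⊆ ·) s)
    (h : ∀ i, IsPartialIso G H (s i)) : IsPartialIso G H (⋃ i, s i) := by
  intro p hp q hq
  obtain ⟨i, hpi⟩ := mem_iUnion.1 hp
  obtain ⟨j, hqj⟩ := mem_iUnion.1 hq
  obtain ⟨k, hik, hjk⟩ := hdir i j
  exact h k p (hik hpi) q (hjk hqj)

lemma exists_compatible (hH : ExtensionProperty H) (h : IsPartialIso G H s) (hs : s.Finite)
    (v : V) : ∃ w, ∀ p ∈ s, (v = p.1 ↔ w = p.2) ∧ (G.Adj v p.1 ↔ H.Adj w p.2) := by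
  by_cases hv : ∃ w, (v, w) ∈ s
  · obtain ⟨w, hw⟩ := hv
    exact ⟨w, fun p hp ↦ h _ hw p hp⟩
  push Not at hv
  set U := Prod.snd '' {p ∈ s | G.Adj v p.1}
  set U' := Prod.snd '' {p ∈ s | ¬ G.Adj v p.1}
  have hUU' : Disjoint U U' := by
    refine Set.disjoint_left.2 ?_
    rintro _ ⟨p, ⟨hp, hadj⟩, rfl⟩ ⟨q, ⟨hq, hnadj⟩, hqp⟩
    exact hnadj ((h q hq p hp).1.2 hqp ▸ hadj)
  obtain ⟨w, hwU, hwU', hadj, hnadj⟩ :=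
    hH.exists_of_finite ((hs.subset (sep_subset _ _)).image _)
      ((hs.subset (sep_subset _ _)).image _) hUU'
  refine ⟨w, fun p hp ↦ ⟨⟨fun hvp ↦ (hv p.2 (hvp ▸ hp)).elim, fun hwp ↦ ?_⟩, ?_⟩⟩
  · by_cases hvp : G.Adj v p.1
    · exact (hwU ⟨p, ⟨hp, hvp⟩, hwp.symm⟩).elim
    · exact (hwU' ⟨p, ⟨hp, hvp⟩, hwp.symm⟩).elim
  · by_cases hvp : G.Adj v p.1
    · exact iff_of_true hvp (hadj _ ⟨p, ⟨hp, hvp⟩, rfl⟩)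
    · exact iff_of_false hvp (hnadj _ ⟨p, ⟨hp, hvp⟩, rfl⟩)

lemma nonempty_iso (h : IsPartialIso G H s) (hdom : ∀ v, ∃ w, (v, w) ∈ s)
    (hcod : ∀ w, ∃ v, (v, w) ∈ s) : Nonempty (G ≃g H) := by
  choose f hf using hdom
  have hbij : Function.Bijective f := by
    refine ⟨fun a b hab ↦ (h _ (hf a) _ (hf b)).1.2 hab, fun w ↦ ?_⟩
    obtain ⟨v, hv⟩ := hcod w
    exact ⟨v, (h _ (hf v) _ hv).1.1 rfl⟩
  exact ⟨⟨Equiv.ofBijective f hbij, fun {a b} ↦ (h _ (hf a) _ (hf b)).2.symm⟩⟩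

end IsPartialIso

abbrev FinPartialIso (G : SimpleGraph V) (H : SimpleGraph W) :=
  {s : Set (V × W) // s.Finite ∧ IsPartialIso G H s}

namespace FinPartialIso

instance : Inhabited (FinPartialIso G H) := ⟨⟨∅, finite_empty, fun _ hp ↦ hp.elim⟩⟩

def definedAtLeft (hH : ExtensionProperty H) (v : V) : Order.Cofinal (FinPartialIso G H) where
  carrier := {s | ∃ w, (v, w) ∈ s.1}
  isCofinal s :=
    have ⟨w, hw⟩ := s.2.2.exists_compatible hH s.2.1 v
    ⟨⟨_, s.2.1.insert (v, w), s.2.2.insert hw⟩, ⟨w, mem_insert _ _⟩, subset_insert _ _⟩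

def definedAtRight (hG : ExtensionProperty G) (w : W) : Order.Cofinal (FinPartialIso G H) where
  carrier := {s | ∃ v, (v, w) ∈ s.1}
  isCofinal s :=
    have ⟨v, hv⟩ := s.2.2.swap.exists_compatible hG
      (s.2.1.preimage Prod.swap_injective.injOn) w
    ⟨⟨_, s.2.1.insert (v, w), s.2.2.insert fun p hp ↦ (hv p.swap hp).imp Iff.symm Iff.symm⟩,
      ⟨v, mem_insert _ _⟩, subset_insert _ _⟩

end FinPartialIso

end SimpleGraph

end BackAndForth

theorem stmt_10_general {V W : Type*} [Countable V] [Countable W]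
    (G : SimpleGraph V) (H : SimpleGraph W)
    (hG : ExtensionProperty G) (hH : ExtensionProperty H) :
    Nonempty (G ≃g H) := by
  have := Encodable.ofCountable (V ⊕ W)
  let D : V ⊕ W → Order.Cofinal (G.FinPartialIso H) :=
    Sum.elim (SimpleGraph.FinPartialIso.definedAtLeft hH)
      (SimpleGraph.FinPartialIso.definedAtRight hG)
  let S := Order.sequenceOfCofinals default D
  have hS : G.IsPartialIso H (⋃ n, (S n).1) :=
    .iUnion_of_directed (Monotone.directed_le fun _ _ hmn ↦
      Order.sequenceOfCofinals.monotone default D hmn) fun n ↦ (S n).2.2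
  refine hS.nonempty_iso (fun v ↦ ?_) (fun w ↦ ?_)
  · obtain ⟨w, hw⟩ := Order.sequenceOfCofinals.encode_mem default D (.inl v)
    exact ⟨w, Set.mem_iUnion.2 ⟨_, hw⟩⟩
  · obtain ⟨v, hv⟩ := Order.sequenceOfCofinals.encode_mem default D (.inr w)
    exact ⟨v, Set.mem_iUnion.2 ⟨_, hv⟩⟩

/-- Any two countably infinite simple graphs satisfying the extension
property are isomorphic. -/
theorem stmt_10 {V W : Type*} [Countable V] [Infinite V] [Countable W] [Infinite W]
    (G : SimpleGraph V) (H : SimpleGraph W)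
    (hG : ExtensionProperty G) (hH : ExtensionProperty H) :
    Nonempty (G ≃g H) :=
  stmt_10_general G H hG hH
end

section
/- There exists a function assigning to every simple graph x on vertex set ℕ a pair (Δ_x, φ_x), where Δ_x is a simple graph on vertex set ℕ × ℕ and φ_x is a graph automorphism of Δ_x, such that: (i) Δ_x satisfies the extension property, hence is isomorphic to the random graph; (ii) the map n ↦ (0, n) is a graph isomorphism from x onto the induced subgraph of Δ_x on the row {0} × ℕ; (iii) φ_x((0, n)) = (1, n) and φ_x((1, n)) = (0, n) for all n ∈ ℕ, and φ_x maps each row {i} × ℕ with i ≥ 2 onto itself; and (iv) for all simple graphs x, y on ℕ, x is isomorphic to y if and only if there exists a graph isomorphism α : Δ_x → Δ_y with α ∘ φ_x = φ_y ∘ α. -/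
namespace RandomExtension

def code : Finset (ℕ × ℕ) ≃ ℕ := Denumerable.eqv _

def HighAdj (u v : ℕ × ℕ) : Prop :=
  2 ≤ u.1 ∧ v.1 < u.1 ∧ v ∈ code.symm u.2

lemma HighAdj.two_le {u v : ℕ × ℕ} (h : HighAdj u v) : 2 ≤ u.1 := h.1

lemma HighAdj.fst_lt {u v : ℕ × ℕ} (h : HighAdj u v) : v.1 < u.1 := h.2.1

def extend (B : SimpleGraph (ℕ × ℕ)) : SimpleGraph (ℕ × ℕ) where
  Adj u v := (u.1 < 2 ∧ v.1 < 2 ∧ B.Adj u v) ∨ HighAdj u v ∨ HighAdj v u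
  symm := ⟨fun _ _ => by
    rintro (⟨hu, hv, h⟩ | h | h)
    exacts [Or.inl ⟨hv, hu, h.symm⟩, Or.inr (Or.inr h), Or.inr (Or.inl h)]⟩
  loopless := ⟨fun v => by
    rintro (⟨-, -, h⟩ | h | h)
    exacts [B.loopless.irrefl v h, h.fst_lt.false, h.fst_lt.false]⟩

variable {B : SimpleGraph (ℕ × ℕ)} {u v : ℕ × ℕ}

lemma extend_adj :
    (extend B).Adj u v ↔ (u.1 < 2 ∧ v.1 < 2 ∧ B.Adj u v) ∨ HighAdj u v ∨ HighAdj v u :=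
  Iff.rfl

lemma extend_adj_of_lt (hu : u.1 < 2) (hv : v.1 < 2) : (extend B).Adj u v ↔ B.Adj u v := by
  have hu' : ¬ HighAdj u v := fun h => by linarith [h.two_le]
  have hv' : ¬ HighAdj v u := fun h => by linarith [h.two_le]
  simp [extend_adj, hu, hv, hu', hv']

lemma not_extend_adj_of_fst_eq (hu : 2 ≤ u.1) (huv : u.1 = v.1) : ¬ (extend B).Adj u v := by
  rintro (⟨h, -⟩ | h | h)
  · omega
  · exact h.fst_lt.ne huv.symm
  · exact h.fst_lt.ne huv

lemma extensionProperty_extend (B : SimpleGraph (ℕ × ℕ)) : ExtensionProperty (extend B) := by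
  intro U W hUW
  set i := (U ∪ W).sup Prod.fst + 2
  have hrow : ∀ v ∈ U ∪ W, v.1 < i := fun v hv => by
    have := Finset.le_sup (f := Prod.fst) hv
    omega
  have hnew : ((i, code U) : ℕ × ℕ) ∉ U ∪ W := fun h => (hrow _ h).false
  refine ⟨(i, code U), fun h => hnew (Finset.mem_union_left _ h),
    fun h => hnew (Finset.mem_union_right _ h), fun u hu => ?_, fun w hw => ?_⟩
  · exact Or.inr (Or.inl ⟨by omega, hrow u (Finset.mem_union_left _ hu), by simpa using hu⟩)
  · have := hrow w (Finset.mem_union_right _ hw)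
    rintro (⟨h, -⟩ | ⟨-, -, h⟩ | h)
    · omega
    · exact Finset.disjoint_left.mp hUW (by simpa using h) hw
    · exact this.not_gt h.fst_lt

def lift (g : ℕ × ℕ → ℕ × ℕ) (v : ℕ × ℕ) : ℕ × ℕ :=
  if v.1 < 2 then g v
  -- members of the coded set in rows `≥ v.1` do not affect adjacency and are left fixed
  else (v.1, code ((code.symm v.2).image
    fun w => if w.1 < v.1 then lift g w else w))
termination_by v.1

variable {g h : ℕ × ℕ → ℕ × ℕ}

lemma lift_of_lt (hv : v.1 < 2) : lift g v = g v := by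
  rw [lift, if_pos hv]

lemma lift_mk_of_le {i n : ℕ} (hi : 2 ≤ i) : lift g (i, n) = (i, code
    ((code.symm n).image fun w => if w.1 < i then lift g w else w)) := by
  rw [lift, if_neg (by omega)]

lemma fst_lift_of_le (hv : 2 ≤ v.1) : (lift g v).1 = v.1 := by
  rw [lift, if_neg (by omega)]

lemma fst_lift_lt_iff (hg : ∀ v : ℕ × ℕ, v.1 < 2 → (g v).1 < 2) {i : ℕ} (hi : 2 ≤ i) :
    (lift g v).1 < i ↔ v.1 < i := by
  rcases lt_or_ge v.1 2 with hv | hv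
  · rw [lift_of_lt hv]
    have := hg v hv
    omega
  · rw [fst_lift_of_le hv]

lemma lift_lift (hh : ∀ v : ℕ × ℕ, v.1 < 2 → (h v).1 < 2) (v : ℕ × ℕ) :
    lift g (lift h v) = lift (g ∘ h) v := by
  induction hrow : v.1 using Nat.strong_induction_on generalizing v with
  | _ i ih =>
  obtain ⟨i, n⟩ := v
  subst hrow
  rcases lt_or_ge i 2 with hi | hi
  · rw [lift_of_lt (v := (i, n)) hi, lift_of_lt (hh _ hi), lift_of_lt (v := (i, n)) hi]
    rfl
  · rw [lift_mk_of_le hi, lift_mk_of_le hi, lift_mk_of_le hi, Equiv.symm_apply_apply,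
      Finset.image_image]
    congr 2
    refine Finset.image_congr fun w _ => ?_
    by_cases hw : w.1 < i
    · simp [hw, (fst_lift_lt_iff hh hi).mpr hw, ih w.1 hw w rfl]
    · simp [hw]

lemma lift_id (v : ℕ × ℕ) : lift id v = v := by
  induction hrow : v.1 using Nat.strong_induction_on generalizing v with
  | _ i ih =>
  obtain ⟨i, n⟩ := v
  subst hrow
  rcases lt_or_ge i 2 with hi | hi
  · exact lift_of_lt hi
  · rw [lift_mk_of_le hi, Finset.image_congr (g := id) fun w _ => ?_, Finset.image_id,
      Equiv.apply_symm_apply]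
    by_cases hw : w.1 < i
    · simp [hw, ih w.1 hw w rfl]
    · simp [hw]

lemma lift_symm_lift (g : ℕ × ℕ ≃ ℕ × ℕ) (hg : ∀ v : ℕ × ℕ, v.1 < 2 → (g v).1 < 2)
    (v : ℕ × ℕ) : lift g.symm (lift g v) = v := by
  rw [lift_lift hg, g.symm_comp_self, lift_id]

section LiftEquiv

variable (g : ℕ × ℕ ≃ ℕ × ℕ) (hg : ∀ v : ℕ × ℕ, (g v).1 < 2 ↔ v.1 < 2)
include hg

lemma symm_fst_lt_two_iff (v : ℕ × ℕ) : (g.symm v).1 < 2 ↔ v.1 < 2 := by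
  simpa using (hg (g.symm v)).symm

def liftEquiv : ℕ × ℕ ≃ ℕ × ℕ where
  toFun := lift g
  invFun := lift g.symm
  left_inv := lift_symm_lift g fun v => (hg v).2
  right_inv v := by
    simpa using lift_symm_lift g.symm (fun v => (symm_fst_lt_two_iff g hg v).2) v

lemma highAdj_lift_iff {u v : ℕ × ℕ} : HighAdj (lift g u) (lift g v) ↔ HighAdj u v := by
  have hlow : ∀ v : ℕ × ℕ, v.1 < 2 → (g v).1 < 2 := fun v => (hg v).2
  rcases lt_or_ge u.1 2 with hu | hu
  · refine iff_of_false (fun h => ?_) (fun h => ?_)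
    · linarith [h.two_le, (fst_lift_lt_iff hlow le_rfl).2 hu]
    · linarith [h.two_le]
  obtain ⟨i, n⟩ := u
  rw [lift_mk_of_le hu]
  simp only [HighAdj, Equiv.symm_apply_apply, fst_lift_lt_iff hlow hu]
  refine and_congr_right fun _ => and_congr_right fun hv => ⟨?_, fun h => ?_⟩
  · intro h
    obtain ⟨w, hw, hwv⟩ := Finset.mem_image.1 h
    by_cases hwi : w.1 < i
    · rw [if_pos hwi] at hwv
      rwa [← (liftEquiv g hg).injective hwv]
    · rw [if_neg hwi] at hwv
      exact absurd ((fst_lift_lt_iff hlow hu).2 hv) (hwv ▸ hwi)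
  · exact Finset.mem_image.2 ⟨v, h, if_pos hv⟩

end LiftEquiv

def liftIso {B' : SimpleGraph (ℕ × ℕ)} (g : B ≃g B')
    (hg : ∀ v : ℕ × ℕ, (g v).1 < 2 ↔ v.1 < 2) : extend B ≃g extend B' where
  toEquiv := liftEquiv g.toEquiv hg
  map_rel_iff' {u v} := by
    change (extend B').Adj (lift g u) (lift g v) ↔ (extend B).Adj u v
    have hlow : ∀ v : ℕ × ℕ, (lift g v).1 < 2 ↔ v.1 < 2 :=
      fun v => fst_lift_lt_iff (fun v => (hg v).2) le_rfl
    have hbase : (lift g u).1 < 2 ∧ (lift g v).1 < 2 ∧ B'.Adj (lift g u) (lift g v) ↔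
        u.1 < 2 ∧ v.1 < 2 ∧ B.Adj u v := by
      rw [hlow, hlow]
      refine and_congr_right fun hu => and_congr_right fun hv => ?_
      rw [lift_of_lt hu, lift_of_lt hv]
      exact g.map_adj_iff
    have hhigh : ∀ a b : ℕ × ℕ, HighAdj (lift g a) (lift g b) ↔ HighAdj a b :=
      fun _ _ => highAdj_lift_iff g.toEquiv hg
    rw [extend_adj, extend_adj, hbase, hhigh, hhigh]

lemma image_liftIso_row {B' : SimpleGraph (ℕ × ℕ)} (g : B ≃g B')
    (hg : ∀ v : ℕ × ℕ, (g v).1 < 2 ↔ v.1 < 2) {i : ℕ} (hi : 2 ≤ i) :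
    liftIso g hg '' {v | v.1 = i} = {v | v.1 = i} := by
  ext v
  constructor
  · rintro ⟨w, hw, rfl⟩
    exact (fst_lift_of_le (hi.trans_eq hw.symm)).trans hw
  · intro hv
    refine ⟨(liftIso g hg).symm v, ?_, (liftIso g hg).apply_symm_apply v⟩
    change (lift g.toEquiv.symm v).1 = i
    rw [fst_lift_of_le (hi.trans_eq (Eq.symm hv)), hv]

def cliqueBlowup (x : SimpleGraph ℕ) : SimpleGraph (ℕ × ℕ) where
  Adj u v := u ≠ v ∧ (u.2 = v.2 ∨ x.Adj u.2 v.2)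
  symm := ⟨fun _ _ h => ⟨h.1.symm, h.2.imp Eq.symm fun h => h.symm⟩⟩
  loopless := ⟨fun _ h => h.1 rfl⟩

variable {x y : SimpleGraph ℕ}

lemma cliqueBlowup_adj : (cliqueBlowup x).Adj u v ↔ u ≠ v ∧ (u.2 = v.2 ∨ x.Adj u.2 v.2) :=
  Iff.rfl

def cliqueBlowupIso (τ : ℕ ≃ ℕ) (σ : x ≃g y) : cliqueBlowup x ≃g cliqueBlowup y where
  toEquiv := τ.prodCongr σ.toEquiv
  map_rel_iff' := by simp [cliqueBlowup_adj, Prod.ext_iff, σ.map_adj_iff]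

lemma extend_cliqueBlowup_adj_zero (m n : ℕ) :
    (extend (cliqueBlowup x)).Adj (0, m) (0, n) ↔ x.Adj m n := by
  rw [extend_adj_of_lt zero_lt_two zero_lt_two, cliqueBlowup_adj]
  simp only [ne_eq, Prod.mk.injEq, true_and]
  exact ⟨fun h => h.2.resolve_left h.1, fun h => ⟨h.ne, Or.inr h⟩⟩

lemma swap_zero_one_lt_two_iff (i : ℕ) : Equiv.swap 0 1 i < 2 ↔ i < 2 := by
  rcases Nat.lt_or_ge i 2 with hi | hi
  · interval_cases i <;> simp
  · rw [Equiv.swap_apply_of_ne_of_ne (by omega) (by omega)]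

lemma swap_zero_one_ne_self {i : ℕ} (hi : i < 2) : Equiv.swap 0 1 i ≠ i := by
  interval_cases i <;> simp

def rowSwap (x : SimpleGraph ℕ) : extend (cliqueBlowup x) ≃g extend (cliqueBlowup x) :=
  liftIso (cliqueBlowupIso (Equiv.swap 0 1) .refl) fun v => swap_zero_one_lt_two_iff v.1

lemma rowSwap_of_lt (hv : v.1 < 2) : rowSwap x v = (Equiv.swap 0 1 v.1, v.2) :=
  lift_of_lt hv

lemma rowSwap_zero (n : ℕ) : rowSwap x (0, n) = (1, n) := by
  simp [rowSwap_of_lt (v := (0, n)) zero_lt_two]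

lemma rowSwap_one (n : ℕ) : rowSwap x (1, n) = (0, n) := by
  simp [rowSwap_of_lt (v := (1, n)) one_lt_two]

lemma adj_rowSwap_iff : (extend (cliqueBlowup x)).Adj v (rowSwap x v) ↔ v.1 < 2 := by
  rcases lt_or_ge v.1 2 with hv | hv
  · refine iff_of_true ?_ hv
    rw [rowSwap_of_lt hv, extend_adj_of_lt hv ((swap_zero_one_lt_two_iff _).2 hv)]
    exact ⟨fun h => swap_zero_one_ne_self hv (congrArg Prod.fst h).symm, Or.inl rfl⟩
  · exact iff_of_false (not_extend_adj_of_fst_eq hv (fst_lift_of_le hv).symm) (by omega)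

def extendIso (σ : x ≃g y) : extend (cliqueBlowup x) ≃g extend (cliqueBlowup y) :=
  liftIso (cliqueBlowupIso (Equiv.refl ℕ) σ) fun _ => Iff.rfl

lemma extendIso_rowSwap (σ : x ≃g y) (v : ℕ × ℕ) :
    extendIso σ (rowSwap x v) = rowSwap y (extendIso σ v) := by
  have hswap : ∀ v : ℕ × ℕ, v.1 < 2 →
      (cliqueBlowupIso (Equiv.swap 0 1) (.refl : x ≃g x) v).1 < 2 :=
    fun v => (swap_zero_one_lt_two_iff v.1).2
  have hσ : ∀ v : ℕ × ℕ, v.1 < 2 → (cliqueBlowupIso (Equiv.refl ℕ) σ v).1 < 2 := fun _ => id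
  exact (lift_lift hswap v).trans
    (lift_lift (g := cliqueBlowupIso (Equiv.swap 0 1) (.refl : y ≃g y)) hσ v).symm

section Commuting

variable (α : extend (cliqueBlowup x) ≃g extend (cliqueBlowup y))
  (hα : ∀ v, α (rowSwap x v) = rowSwap y (α v))
include hα

lemma fst_apply_lt_two_iff (v : ℕ × ℕ) : (α v).1 < 2 ↔ v.1 < 2 := by
  rw [← adj_rowSwap_iff (x := y), ← hα, α.map_adj_iff, adj_rowSwap_iff]

lemma symm_apply_rowSwap (v : ℕ × ℕ) : α.symm (rowSwap y v) = rowSwap x (α.symm v) :=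
  α.injective (by rw [hα, α.apply_symm_apply, α.apply_symm_apply])

lemma snd_apply_of_lt (hv : v.1 < 2) : (α v).2 = (α (0, v.2)).2 := by
  obtain ⟨i, n⟩ := v
  interval_cases i
  · rfl
  · have h0 : (α (0, n)).1 < 2 := (fst_apply_lt_two_iff α hα _).2 zero_lt_two
    change (α (1, n)).2 = (α (0, n)).2
    rw [← rowSwap_zero, hα, rowSwap_of_lt h0]

lemma symm_apply_zero_apply_zero (n : ℕ) : (α.symm (0, (α (0, n)).2)).2 = n := by
  have h0 : (α (0, n)).1 < 2 := (fst_apply_lt_two_iff α hα _).2 zero_lt_two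
  simpa using (snd_apply_of_lt α.symm (symm_apply_rowSwap α hα) h0).symm

def columnEquiv : ℕ ≃ ℕ where
  toFun n := (α (0, n)).2
  invFun n := (α.symm (0, n)).2
  left_inv := symm_apply_zero_apply_zero α hα
  right_inv n := by
    simpa using symm_apply_zero_apply_zero α.symm (symm_apply_rowSwap α hα) n

def columnIso : x ≃g y where
  toEquiv := columnEquiv α hα
  map_rel_iff' {m n} := by
    change y.Adj (α (0, m)).2 (α (0, n)).2 ↔ x.Adj m n
    have hm : (α (0, m)).1 < 2 := (fst_apply_lt_two_iff α hα _).2 zero_lt_two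
    have hn : (α (0, n)).1 < 2 := (fst_apply_lt_two_iff α hα _).2 zero_lt_two
    have hinj : (α (0, m)).2 = (α (0, n)).2 ↔ m = n := (columnEquiv α hα).injective.eq_iff
    rw [← extend_cliqueBlowup_adj_zero (x := x), ← α.map_adj_iff, extend_adj_of_lt hm hn,
      cliqueBlowup_adj, hinj, α.injective.ne_iff, ne_eq, Prod.mk.injEq]
    have hne : y.Adj (α (0, m)).2 (α (0, n)).2 → m ≠ n := fun h hmn => h.ne (hinj.2 hmn)
    tauto

end Commuting

end RandomExtension

/-- There is an assignment `x ↦ (Δ_x, φ_x)` of a graph `Δ_x` on `ℕ × ℕ`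
and an automorphism `φ_x` of `Δ_x` to each simple graph `x` on `ℕ` such that:
(i) `Δ_x` has the extension property (hence is isomorphic to the random graph);
(ii) `n ↦ (0, n)` is an isomorphism from `x` onto the induced subgraph on row `0`;
(iii) `φ_x` interchanges `(0, n)` and `(1, n)` and maps each row `i ≥ 2` onto itself;
(iv) `x ≅ y` iff there is an isomorphism `α : Δ_x → Δ_y` with `α ∘ φ_x = φ_y ∘ α`. -/
theorem stmt_11 :
    ∃ (Δ : SimpleGraph ℕ → SimpleGraph (ℕ × ℕ))
      (φ : ∀ x : SimpleGraph ℕ, Δ x ≃g Δ x),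
      (∀ x : SimpleGraph ℕ, ExtensionProperty (Δ x)) ∧
      (∀ x : SimpleGraph ℕ, ∀ m n : ℕ, x.Adj m n ↔ (Δ x).Adj (0, m) (0, n)) ∧
      (∀ x : SimpleGraph ℕ, ∀ n : ℕ, φ x (0, n) = (1, n) ∧ φ x (1, n) = (0, n)) ∧
      (∀ x : SimpleGraph ℕ, ∀ i : ℕ, 2 ≤ i →
        (φ x) '' {v : ℕ × ℕ | v.1 = i} = {v : ℕ × ℕ | v.1 = i}) ∧
      (∀ x y : SimpleGraph ℕ,
        Nonempty (x ≃g y) ↔ ∃ α : Δ x ≃g Δ y, ∀ v : ℕ × ℕ, α (φ x v) = φ y (α v)) := by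
  open RandomExtension in
  refine ⟨fun x => extend (cliqueBlowup x), rowSwap, fun x => extensionProperty_extend _,
    fun x m n => (extend_cliqueBlowup_adj_zero m n).symm,
    fun x n => ⟨rowSwap_zero n, rowSwap_one n⟩, fun x i hi => image_liftIso_row _ _ hi,
    fun x y => ⟨fun ⟨σ⟩ => ⟨extendIso σ, extendIso_rowSwap σ⟩,
      fun ⟨α, hα⟩ => ⟨columnIso α hα⟩⟩⟩
end

section
/- Let Γ be a simple graph on vertex set ℕ satisfying the extension property (so Γ is a copy of the random graph). The isomorphism relation on countable simple graphs is Borel reducible to the conjugacy relation on Aut(Γ). Precisely: code simple graphs on ℕ as elements of the Polish space (ℕ × ℕ) → Bool (with Bool discrete and the product topology), letting GR denote the set of codes defining an irreflexive symmetric relation on ℕ, and code maps ℕ → ℕ as elements of the Polish space ℕ → ℕ. Then there exists a Borel-measurable function f from (ℕ × ℕ) → Bool to ℕ → ℕ such that for every R ∈ GR, f(R) is a graph automorphism of Γ, and for all R, S ∈ GR: the graphs coded by R and S are isomorphic if and only if there exists a graph automorphism β of Γ with β ∘ f(R) = f(S) ∘ β. -/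
noncomputable section

theorem Measurable.dite_find {α β : Type*} [MeasurableSpace α] [MeasurableSpace β]
    {p : α → ℕ → Prop} {_ : ∀ x, DecidablePred (p x)} {_ : ∀ x, Decidable (∃ k, p x k)}
    {f : ℕ → α → β} {g : α → β}
    (hp : ∀ k, Measurable fun x => p x k) (hf : ∀ k, Measurable (f k)) (hg : Measurable g) :
    Measurable fun x => if h : ∃ k, p x k then f (Nat.find h) x else g x := by
  let q : ℕ → α → Prop
    | 0, x => ¬ ∃ k, p x k
    | k + 1, x => p x k
  let F : ℕ → α → β
    | 0 => g
    | k + 1 => f k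
  classical
  have hq : ∀ x, ∃ n, q n x := fun x => by
    by_cases h : ∃ k, p x k
    · obtain ⟨k, hk⟩ := h; exact ⟨k + 1, hk⟩
    · exact ⟨0, h⟩
  have hmeas : Measurable fun x => F (Nat.find (hq x)) x :=
    Measurable.find (fun n => by cases n <;> simp [F, hg, hf])
      (fun n => by cases n <;> simp [q] <;> fun_prop) hq
  convert hmeas using 2 with x
  split_ifs with h
  · rw [Nat.find_comp_succ (hq x) h (by simpa [q] using h)]
    convert rfl
  · rw [(Nat.find_eq_zero (hq x)).2 h]

theorem measurable_comp_of_countable {X Y Z : Type*} [MeasurableSpace X] [MeasurableSpace Y]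
    [MeasurableSpace Z] [Countable Y] [MeasurableSingletonClass Y] {f : X → Y → Z}
    (hf : ∀ y, Measurable fun x => f x y) {g : X → Y} (hg : Measurable g) :
    Measurable fun x => f x (g x) :=
  (measurable_from_prod_countable_left (f := fun p : X × Y => f p.1 p.2) hf).comp
    (measurable_id.prodMk hg)

section BackAndForth

variable (forth back : List (ℕ × ℕ) → ℕ → List (ℕ × ℕ))

def bfChain : ℕ → List (ℕ × ℕ)
  | 0 => []
  | s + 1 => back (forth (bfChain s) s) s

structure IsBackAndForth (P : List (ℕ × ℕ) → Prop) : Prop where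
  nil : P []
  forth_spec : ∀ q n, P q → P (forth q n) ∧ q ⊆ forth q n ∧ n ∈ (forth q n).map Prod.fst
  back_spec : ∀ q n, P q → P (back q n) ∧ q ⊆ back q n ∧ n ∈ (back q n).map Prod.snd
  inj : ∀ q, P q → ∀ c ∈ q, ∀ d ∈ q, (c.1 = d.1 ↔ c.2 = d.2)

namespace IsBackAndForth

variable {forth back} {P : List (ℕ × ℕ) → Prop} (h : IsBackAndForth forth back P)
include h

theorem prop_bfChain (s : ℕ) : P (bfChain forth back s) := by
  induction s with
  | zero => exact h.nil
  | succ s ih => exact (h.back_spec _ s (h.forth_spec _ s ih).1).1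

theorem bfChain_subset_succ (s : ℕ) : bfChain forth back s ⊆ bfChain forth back (s + 1) :=
  List.Subset.trans (h.forth_spec _ s (h.prop_bfChain s)).2.1
    (h.back_spec _ s (h.forth_spec _ s (h.prop_bfChain s)).1).2.1

theorem bfChain_mono {s t : ℕ} (hst : s ≤ t) : bfChain forth back s ⊆ bfChain forth back t := by
  induction t, hst using Nat.le_induction with
  | base => exact List.Subset.refl _
  | succ t _ ih => exact List.Subset.trans ih (h.bfChain_subset_succ t)

theorem exists_mem_bfChain_fst (n : ℕ) : ∃ m, (n, m) ∈ bfChain forth back (n + 1) := by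
  have hf := h.forth_spec _ n (h.prop_bfChain n)
  obtain ⟨c, hc, hcn⟩ := List.mem_map.1 hf.2.2
  exact ⟨c.2, hcn ▸ (h.back_spec _ n hf.1).2.1 hc⟩

theorem exists_mem_bfChain_snd (m : ℕ) : ∃ n, (n, m) ∈ bfChain forth back (m + 1) := by
  have hb := h.back_spec _ m (h.forth_spec _ m (h.prop_bfChain m)).1
  obtain ⟨c, hc, hcm⟩ := List.mem_map.1 hb.2.2
  exact ⟨c.1, hcm ▸ hc⟩

theorem exists_mem_of_mem_bfChain {c d : ℕ × ℕ} {s t : ℕ} (hc : c ∈ bfChain forth back s)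
    (hd : d ∈ bfChain forth back t) :
    ∃ q, P q ∧ c ∈ q ∧ d ∈ q :=
  ⟨_, h.prop_bfChain (max s t), h.bfChain_mono (le_max_left s t) hc,
    h.bfChain_mono (le_max_right s t) hd⟩

theorem fst_eq_iff_snd_eq {c d : ℕ × ℕ} {s t : ℕ} (hc : c ∈ bfChain forth back s)
    (hd : d ∈ bfChain forth back t) : c.1 = d.1 ↔ c.2 = d.2 := by
  obtain ⟨q, hq, hcq, hdq⟩ := h.exists_mem_of_mem_bfChain hc hd
  exact h.inj q hq c hcq d hdq

def toEquiv : ℕ ≃ ℕ where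
  toFun n := Nat.find (h.exists_mem_bfChain_fst n)
  invFun m := Nat.find (h.exists_mem_bfChain_snd m)
  left_inv n := (h.fst_eq_iff_snd_eq (Nat.find_spec (h.exists_mem_bfChain_snd _))
    (Nat.find_spec (h.exists_mem_bfChain_fst n))).2 rfl
  right_inv m := (h.fst_eq_iff_snd_eq (Nat.find_spec (h.exists_mem_bfChain_fst _))
    (Nat.find_spec (h.exists_mem_bfChain_snd m))).1 rfl

theorem mem_bfChain_toEquiv (n : ℕ) : (n, h.toEquiv n) ∈ bfChain forth back (n + 1) :=
  Nat.find_spec (h.exists_mem_bfChain_fst n)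

theorem exists_mem_toEquiv (a b : ℕ) : ∃ q, P q ∧ (a, h.toEquiv a) ∈ q ∧ (b, h.toEquiv b) ∈ q :=
  h.exists_mem_of_mem_bfChain (h.mem_bfChain_toEquiv a) (h.mem_bfChain_toEquiv b)

end IsBackAndForth

theorem exists_equiv_of_extend {P : List (ℕ × ℕ) → Prop} (nil : P [])
    (forth : ∀ q, P q → ∀ n, ∃ q', P q' ∧ q ⊆ q' ∧ n ∈ q'.map Prod.fst)
    (back : ∀ q, P q → ∀ n, ∃ q', P q' ∧ q ⊆ q' ∧ n ∈ q'.map Prod.snd)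
    (inj : ∀ q, P q → ∀ c ∈ q, ∀ d ∈ q, (c.1 = d.1 ↔ c.2 = d.2)) :
    ∃ e : ℕ ≃ ℕ, ∀ a b, ∃ q, P q ∧ (a, e a) ∈ q ∧ (b, e b) ∈ q := by
  classical
  let forth' q n := if hq : P q then Classical.choose (forth q hq n) else q
  let back' q n := if hq : P q then Classical.choose (back q hq n) else q
  have h : IsBackAndForth forth' back' P :=
    { nil := nil
      forth_spec := fun q n hq => by simpa [forth', hq] using Classical.choose_spec (forth q hq n)
      back_spec := fun q n hq => by simpa [back', hq] using Classical.choose_spec (back q hq n)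
      inj := inj }
  exact ⟨h.toEquiv, h.exists_mem_toEquiv⟩

end BackAndForth

theorem mem_map_swap_iff {α β : Type*} {c : β × α} {q : List (α × β)} :
    c ∈ q.map Prod.swap ↔ c.swap ∈ q := by
  obtain ⟨x, y⟩ := c
  exact List.mem_map_swap y x q

theorem setOf_mem_map_swap {α β : Type*} (q : List (α × β)) :
    {c | c ∈ q.map Prod.swap} = Prod.swap ⁻¹' {c | c ∈ q} :=
  Set.ext fun _ => mem_map_swap_iff

section PartialIso

variable {α β : Type*} (G : SimpleGraph α) (H : SimpleGraph β)

def Compat (c d : α × β) : Prop :=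
  (c.1 = d.1 ↔ c.2 = d.2) ∧ (G.Adj c.1 d.1 ↔ H.Adj c.2 d.2)

def IsPartialIso (s : Set (α × β)) : Prop :=
  ∀ c ∈ s, ∀ d ∈ s, Compat G H c d

variable {G H}

theorem Compat.refl (c : α × β) : Compat G H c c := by simp [Compat]

theorem Compat.symm {c d : α × β} (h : Compat G H c d) : Compat G H d c :=
  ⟨by rw [eq_comm, h.1, eq_comm], by rw [G.adj_comm, h.2, H.adj_comm]⟩

theorem compat_swap {c d : α × β} : Compat H G c.swap d.swap ↔ Compat G H c d := by
  simp only [Compat, Prod.fst_swap, Prod.snd_swap]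
  exact and_congr iff_comm iff_comm

theorem IsPartialIso.insert {s : Set (α × β)} {c : α × β} (hs : IsPartialIso G H s)
    (hc : ∀ d ∈ s, Compat G H c d) : IsPartialIso G H (insert c s) := by
  rintro d hd d' hd'
  rcases hd with rfl | hd <;> rcases hd' with rfl | hd'
  exacts [Compat.refl _, hc _ hd', (hc _ hd).symm, hs _ hd _ hd']

theorem IsPartialIso.swap {s : Set (α × β)} (hs : IsPartialIso G H s) :
    IsPartialIso H G (Prod.swap ⁻¹' s) :=
  fun _ hc _ hd => compat_swap.2 (hs _ hc _ hd)

theorem IsPartialIso.exists_compat {q : List (α × β)} (hq : IsPartialIso G H {c | c ∈ q})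
    (hH : ExtensionProperty H) {a : α} (ha : a ∉ q.map Prod.fst) :
    ∃ b, ∀ d ∈ q, Compat G H (a, b) d := by
  classical
  set U := (q.toFinset.filter fun c => G.Adj a c.1).image Prod.snd
  set W := (q.toFinset.filter fun c => ¬ G.Adj a c.1).image Prod.snd
  have hUW : Disjoint U W := by
    simp only [U, W, Finset.disjoint_left, Finset.mem_image, Finset.mem_filter,
      List.mem_toFinset]
    rintro _ ⟨c, ⟨hc, hac⟩, rfl⟩ ⟨d, ⟨hd, had⟩, hdc⟩
    exact had ((hq d hd c hc).1.2 hdc ▸ hac)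
  obtain ⟨b, hbU, hbW, hadjU, hadjW⟩ := hH U W hUW
  refine ⟨b, fun d hd => ?_⟩
  have had : a ≠ d.1 := fun h => ha (List.mem_map.2 ⟨d, hd, h.symm⟩)
  by_cases hda : G.Adj a d.1
  · have hdU : d.2 ∈ U := Finset.mem_image.2 ⟨d, by simp [hd, hda], rfl⟩
    exact ⟨iff_of_false had fun (h : b = d.2) => hbU (h ▸ hdU), iff_of_true hda (hadjU _ hdU)⟩
  · have hdW : d.2 ∈ W := Finset.mem_image.2 ⟨d, by simp [hd, hda], rfl⟩
    exact ⟨iff_of_false had fun (h : b = d.2) => hbW (h ▸ hdW), iff_of_false hda (hadjW _ hdW)⟩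

end PartialIso

section CanonicalIso

variable {G H : SimpleGraph ℕ}

open Classical in
/-- Choosing the least admissible partner makes the construction measurable in `G` and `H`. -/
def extendFst (G H : SimpleGraph ℕ) (q : List (ℕ × ℕ)) (n : ℕ) : List (ℕ × ℕ) :=
  if n ∈ q.map Prod.fst then q
  else if h : ∃ m, ∀ d ∈ q, Compat G H (n, m) d then (n, Nat.find h) :: q else q

def extendSnd (G H : SimpleGraph ℕ) (q : List (ℕ × ℕ)) (n : ℕ) : List (ℕ × ℕ) :=
  (extendFst H G (q.map Prod.swap) n).map Prod.swap

theorem extendFst_spec (hH : ExtensionProperty H) {q : List (ℕ × ℕ)}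
    (hq : IsPartialIso G H {c | c ∈ q}) (n : ℕ) :
    IsPartialIso G H {c | c ∈ extendFst G H q n} ∧ q ⊆ extendFst G H q n ∧
      n ∈ (extendFst G H q n).map Prod.fst := by
  classical
  by_cases hn : n ∈ q.map Prod.fst
  · simp only [extendFst, if_pos hn]
    exact ⟨hq, List.Subset.refl q, hn⟩
  have hex := hq.exists_compat hH hn
  simp only [extendFst, if_neg hn, dif_pos hex]
  refine ⟨?_, List.subset_cons_self _ _, List.mem_cons_self ..⟩
  simpa only [List.mem_cons, Set.ofPred_or, Set.ofPred_eq_eq_singleton, Set.singleton_union]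
    using hq.insert (Nat.find_spec hex)

theorem extendSnd_spec (hG : ExtensionProperty G) {q : List (ℕ × ℕ)}
    (hq : IsPartialIso G H {c | c ∈ q}) (n : ℕ) :
    IsPartialIso G H {c | c ∈ extendSnd G H q n} ∧ q ⊆ extendSnd G H q n ∧
      n ∈ (extendSnd G H q n).map Prod.snd := by
  have hswap : IsPartialIso H G {c | c ∈ q.map Prod.swap} := by
    rw [setOf_mem_map_swap]; exact hq.swap
  obtain ⟨h1, h2, h3⟩ := extendFst_spec hG hswap n
  refine ⟨by rw [extendSnd, setOf_mem_map_swap]; exact h1.swap, fun c hc => ?_,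
    by simpa [extendSnd] using h3⟩
  rw [extendSnd, mem_map_swap_iff]
  exact h2 (mem_map_swap_iff.2 hc)

theorem isBackAndForth_extend (hG : ExtensionProperty G) (hH : ExtensionProperty H) :
    IsBackAndForth (extendFst G H) (extendSnd G H) (fun q => IsPartialIso G H {c | c ∈ q}) where
  nil := by simp [IsPartialIso]
  forth_spec _ n hq := extendFst_spec hH hq n
  back_spec _ n hq := extendSnd_spec hG hq n
  inj _ hq c hc d hd := (hq c hc d hd).1

def canonicalIso (hG : ExtensionProperty G) (hH : ExtensionProperty H) : G ≃g H where
  toEquiv := (isBackAndForth_extend hG hH).toEquiv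
  map_rel_iff' {a b} := by
    obtain ⟨q, hq, ha, hb⟩ := (isBackAndForth_extend hG hH).exists_mem_toEquiv a b
    exact (hq _ ha _ hb).2.symm

end CanonicalIso

section Measurability

local instance : MeasurableSpace (List (ℕ × ℕ)) := ⊤

local instance : DiscreteMeasurableSpace (List (ℕ × ℕ)) := ⟨fun _ => trivial⟩

variable {X : Type*} [MeasurableSpace X]

theorem measurable_bfChain {forth back : X → List (ℕ × ℕ) → ℕ → List (ℕ × ℕ)}
    (hforth : ∀ q n, Measurable fun x => forth x q n)
    (hback : ∀ q n, Measurable fun x => back x q n) (s : ℕ) :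
    Measurable fun x => bfChain (forth x) (back x) s := by
  induction s with
  | zero => exact measurable_const
  | succ s ih =>
    exact measurable_comp_of_countable (fun q => hback q s)
      (measurable_comp_of_countable (fun q => hforth q s) ih)

variable {G H : X → SimpleGraph ℕ} (hG : ∀ u v, Measurable fun x => (G x).Adj u v)
  (hH : ∀ u v, Measurable fun x => (H x).Adj u v)
include hG hH

theorem measurable_extendFst (q : List (ℕ × ℕ)) (n : ℕ) :
    Measurable fun x => extendFst (G x) (H x) q n := by
  by_cases hn : n ∈ q.map Prod.fst
  · simp only [extendFst, if_pos hn, measurable_const]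
  simp only [extendFst, if_neg hn]
  refine Measurable.dite_find (f := fun m (_ : X) => (n, m) :: q) (fun m => ?_)
    (fun _ => measurable_const) measurable_const
  exact .forall fun d => measurable_const.imp (measurable_const.and ((hG _ _).iff (hH _ _)))

theorem measurable_extendSnd (q : List (ℕ × ℕ)) (n : ℕ) :
    Measurable fun x => extendSnd (G x) (H x) q n :=
  (measurable_from_top (α := List (ℕ × ℕ))).comp (measurable_extendFst hH hG _ n)

theorem measurable_canonicalIso_apply (hGe : ∀ x, ExtensionProperty (G x))
    (hHe : ∀ x, ExtensionProperty (H x)) (n : ℕ) :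
    Measurable fun x => canonicalIso (hGe x) (hHe x) n := by
  refine measurable_find _ fun k => ?_
  exact measurable_bfChain (measurable_extendFst hG hH) (measurable_extendSnd hG hH) (n + 1)
    .of_discrete

theorem measurable_canonicalIso_symm_apply (hGe : ∀ x, ExtensionProperty (G x))
    (hHe : ∀ x, ExtensionProperty (H x)) (n : ℕ) :
    Measurable fun x => (canonicalIso (hGe x) (hHe x)).symm n := by
  refine measurable_find _ fun k => ?_
  exact measurable_bfChain (measurable_extendFst hG hH) (measurable_extendSnd hG hH) (n + 1)
    .of_discrete

end Measurability

section TwinGraph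

def twin (n : ℕ) : ℕ := if n % 2 = 0 then n else if n % 4 = 1 then n + 2 else n - 2

theorem twin_cases (n : ℕ) :
    (n % 2 = 0 ∧ twin n = n) ∨ (n % 4 = 1 ∧ twin n = n + 2) ∨ (n % 4 = 3 ∧ twin n = n - 2) := by
  unfold twin; split_ifs <;> omega

theorem twin_twin (n : ℕ) : twin (twin n) = n := by
  rcases twin_cases n with h | h | h <;> rcases twin_cases (twin n) with h' | h' | h' <;> omega

theorem twin_injective : Function.Injective twin :=
  Function.LeftInverse.injective twin_twin

theorem twin_eq_self_iff {n : ℕ} : twin n = n ↔ n % 2 = 0 := by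
  rcases twin_cases n with h | h | h <;> omega

theorem twin_mod_two (n : ℕ) : twin n % 2 = n % 2 := by
  rcases twin_cases n with h | h | h <;> omega

theorem twin_div_four (n : ℕ) : twin n / 4 = n / 4 := by
  rcases twin_cases n with h | h | h <;> omega

/-- The data of block `k` (the odd vertices `4k + 1` and `4k + 3`) is decoded from the second
coordinate of `k`, so that every datum recurs for arbitrarily large `k`. -/
def blockData (k : ℕ) : Finset ℕ × Bool :=
  (Encodable.decode k.unpair.2).getD (∅, false)

theorem exists_blockData_eq (N : ℕ) (T : Finset ℕ) (b : Bool) :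
    ∃ k, N ≤ k ∧ blockData k = (T, b) :=
  ⟨Nat.pair N (Encodable.encode (T, b)), Nat.left_le_pair _ _, by
    simp [blockData, Nat.unpair_pair, Encodable.encodek]⟩

/-- The odd vertex `u` owns the pair `{u, v}` when `v` is even or lies in an earlier block.
The owner decides the adjacency through its block data, which `4k + 3` reads through `twin`;
this makes `twin` an automorphism of `twinGraph G`. -/
def Owns (u v : ℕ) : Prop := u % 2 = 1 ∧ (v % 2 = 0 ∨ v / 4 < u / 4)

def Sees (u v : ℕ) : Prop := (if u % 4 = 1 then v else twin v) ∈ (blockData (u / 4)).1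

def TwinRel (G : SimpleGraph ℕ) (u v : ℕ) : Prop :=
  (u % 2 = 0 ∧ v % 2 = 0 ∧ G.Adj (u / 2) (v / 2)) ∨
    (u % 2 = 1 ∧ v = twin u ∧ (blockData (u / 4)).2 = true) ∨ (Owns u v ∧ Sees u v)

def twinGraph (G : SimpleGraph ℕ) : SimpleGraph ℕ := SimpleGraph.fromRel (TwinRel G)

variable {G : SimpleGraph ℕ}

theorem twinGraph_adj_double {m n : ℕ} : (twinGraph G).Adj (2 * m) (2 * n) ↔ G.Adj m n := by
  have hm : 2 * m / 2 = m := by omega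
  have hn : 2 * n / 2 = n := by omega
  simp only [twinGraph, SimpleGraph.fromRel_adj, TwinRel, Owns, hm, hn]
  constructor
  · rintro ⟨-, (⟨-, -, h⟩ | ⟨h, -⟩ | ⟨⟨h, -⟩, -⟩) | (⟨-, -, h⟩ | ⟨h, -⟩ | ⟨⟨h, -⟩, -⟩)⟩ <;>
      first | omega | exact h | exact h.symm
  · intro h
    exact ⟨fun he => h.ne (by omega), Or.inl (Or.inl ⟨by omega, by omega, h⟩)⟩

theorem not_twinRel_of_owns {u v : ℕ} (h : Owns u v) : ¬ TwinRel G v u := by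
  unfold Owns at h
  rintro (⟨-, hu, -⟩ | ⟨hv, rfl, -⟩ | ⟨⟨hv, h'⟩, -⟩)
  · omega
  · rw [twin_mod_two, twin_div_four] at h; omega
  · omega

theorem twinRel_iff_of_owns {u v : ℕ} (h : Owns u v) : TwinRel G u v ↔ Sees u v := by
  refine ⟨?_, fun hs => Or.inr (Or.inr ⟨h, hs⟩)⟩
  unfold Owns at h
  rintro (⟨hu, -⟩ | ⟨-, rfl, -⟩ | ⟨-, hs⟩)
  · omega
  · rw [twin_mod_two, twin_div_four] at h; omega
  · exact hs

theorem twinGraph_adj_of_owns {u v : ℕ} (h : Owns u v) : (twinGraph G).Adj u v ↔ Sees u v := by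
  have hne : u ≠ v := by rintro rfl; unfold Owns at h; omega
  simp only [twinGraph, SimpleGraph.fromRel_adj, twinRel_iff_of_owns h, ne_eq, hne,
    not_false_eq_true, true_and, iff_false_intro (not_twinRel_of_owns h), or_false]

theorem twinGraph_adj_twin_self {u : ℕ} (hu : u % 2 = 1) :
    (twinGraph G).Adj u (twin u) ↔ (blockData (u / 4)).2 = true := by
  have hne : u ≠ twin u := fun h => by have := twin_eq_self_iff.1 h.symm; omega
  have key : ∀ {w}, w % 2 = 1 → (TwinRel G w (twin w) ↔ (blockData (w / 4)).2 = true) := by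
    intro w hw
    refine ⟨?_, fun h => Or.inr (Or.inl ⟨hw, rfl, h⟩)⟩
    rintro (⟨h1, -⟩ | ⟨-, -, h⟩ | ⟨⟨-, h1⟩, -⟩)
    · omega
    · exact h
    · rw [twin_mod_two, twin_div_four] at h1; omega
  have key' : TwinRel G (twin u) u ↔ (blockData (u / 4)).2 = true := by
    simpa only [twin_twin, twin_div_four] using key (w := twin u) (by rwa [twin_mod_two])
  simp only [twinGraph, SimpleGraph.fromRel_adj, ne_eq, hne, not_false_eq_true, true_and, key hu,
    key', or_self]

theorem owns_twin {u v : ℕ} : Owns (twin u) (twin v) ↔ Owns u v := by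
  simp only [Owns, twin_mod_two, twin_div_four]

theorem sees_twin {u v : ℕ} (hu : u % 2 = 1) : Sees (twin u) (twin v) ↔ Sees u v := by
  rw [Sees, Sees, twin_div_four]
  rcases twin_cases u with h | h | h
  · omega
  · simp [h.2, h.1, show (u + 2) % 4 ≠ 1 by omega, twin_twin]
  · simp [h.2, h.1, show (u - 2) % 4 = 1 by omega]

theorem twinRel_twin {u v : ℕ} : TwinRel G (twin u) (twin v) ↔ TwinRel G u v := by
  refine or_congr ?_ (or_congr ?_ ?_)
  · rcases Nat.mod_two_eq_zero_or_one u with hu | hu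
    · rcases Nat.mod_two_eq_zero_or_one v with hv | hv
      · rw [twin_eq_self_iff.2 hu, twin_eq_self_iff.2 hv]
      · simp [twin_mod_two, hv]
    · simp [twin_mod_two, hu]
  · simp only [twin_mod_two, twin_div_four, twin_injective.eq_iff]
  · refine ⟨fun ⟨ho, hs⟩ => ?_, fun ⟨ho, hs⟩ => ⟨owns_twin.2 ho, (sees_twin ho.1).2 hs⟩⟩
    exact ⟨owns_twin.1 ho, (sees_twin (owns_twin.1 ho).1).1 hs⟩

theorem twinGraph_adj_twin {u v : ℕ} :
    (twinGraph G).Adj (twin u) (twin v) ↔ (twinGraph G).Adj u v := by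
  simp only [twinGraph, SimpleGraph.fromRel_adj, twinRel_twin, twin_injective.ne_iff]

def twinAut (G : SimpleGraph ℕ) : twinGraph G ≃g twinGraph G where
  toEquiv := Function.Involutive.toPerm twin twin_twin
  map_rel_iff' := twinGraph_adj_twin

theorem mem_blockData_of_adj {x v : ℕ} (hx : x % 2 = 1) (hv : v % 2 = 0)
    (h : (twinGraph G).Adj x v) : v ∈ (blockData (x / 4)).1 := by
  have hs := (twinGraph_adj_of_owns ⟨hx, Or.inl hv⟩).1 h
  rw [Sees, twin_eq_self_iff.2 hv, ite_self] at hs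
  exact hs

theorem exists_twinGraph_witness (G : SimpleGraph ℕ) (T : Finset ℕ) (b : Bool) (N : ℕ) :
    ∃ x, x % 2 = 1 ∧ N ≤ x / 4 ∧
      (∀ v, v % 2 = 0 ∨ v / 4 < x / 4 → ((twinGraph G).Adj x v ↔ v ∈ T)) ∧
      ((twinGraph G).Adj x (twin x) ↔ b = true) := by
  obtain ⟨k, hk, hT⟩ := exists_blockData_eq N T b
  have hx : (4 * k + 1) / 4 = k := by omega
  refine ⟨4 * k + 1, by omega, by omega, fun v hv => ?_, ?_⟩
  · rw [twinGraph_adj_of_owns ⟨by omega, hv⟩, Sees, if_pos (by omega), hx, hT]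
  · rw [twinGraph_adj_twin_self (by omega), hx, hT]

theorem exists_div_four_lt (A : Finset ℕ) : ∃ N, ∀ a ∈ A, a / 4 < N := by
  obtain ⟨N, hN⟩ := A.exists_nat_subset_range
  exact ⟨N, fun a ha => by have := Finset.mem_range.1 (hN ha); omega⟩

theorem extensionProperty_twinGraph (G : SimpleGraph ℕ) : ExtensionProperty (twinGraph G) := by
  intro U W hUW
  obtain ⟨N, hN⟩ := exists_div_four_lt (U ∪ W)
  obtain ⟨x, -, hxN, hx, -⟩ := exists_twinGraph_witness G U false N
  have hlt : ∀ a ∈ U ∪ W, a / 4 < x / 4 := fun a ha => (hN a ha).trans_le hxN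
  refine ⟨x, fun h => ?_, fun h => ?_, fun u hu => ?_, fun w hw => ?_⟩
  · exact (hlt x (Finset.mem_union_left _ h)).false
  · exact (hlt x (Finset.mem_union_right _ h)).false
  · exact (hx u (Or.inr (hlt u (Finset.mem_union_left _ hu)))).2 hu
  · rw [hx w (Or.inr (hlt w (Finset.mem_union_right _ hw)))]
    exact Finset.disjoint_right.1 hUW hw

theorem measurable_twinGraph_adj {X : Type*} [MeasurableSpace X] {G : X → SimpleGraph ℕ}
    (hG : ∀ m n, Measurable fun x => (G x).Adj m n) (u v : ℕ) :
    Measurable fun x => (twinGraph (G x)).Adj u v := by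
  have hrel : ∀ u v, Measurable fun x => TwinRel (G x) u v := fun u v =>
    (measurable_const.and (measurable_const.and (hG _ _))).or measurable_const
  exact measurable_const.and ((hrel u v).or (hrel v u))

end TwinGraph

section TwinBackAndForth

variable {G H : SimpleGraph ℕ}

theorem compat_map_twin {c d : ℕ × ℕ} :
    Compat (twinGraph G) (twinGraph H) (Prod.map twin twin c) (Prod.map twin twin d) ↔
      Compat (twinGraph G) (twinGraph H) c d := by
  simp only [Compat, Prod.map_fst, Prod.map_snd, twin_injective.eq_iff, twinGraph_adj_twin]

theorem isPartialIso_insert_twin {s : Set (ℕ × ℕ)} {c : ℕ × ℕ}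
    (hs : IsPartialIso (twinGraph G) (twinGraph H) s)
    (hst : ∀ d ∈ s, Prod.map twin twin d ∈ s)
    (hc : ∀ d ∈ s, Compat (twinGraph G) (twinGraph H) c d)
    (hcc : Compat (twinGraph G) (twinGraph H) c (Prod.map twin twin c)) :
    IsPartialIso (twinGraph G) (twinGraph H) (insert c (insert (Prod.map twin twin c) s)) := by
  have hc' : ∀ d ∈ s, Compat (twinGraph G) (twinGraph H) (Prod.map twin twin c) d := by
    intro d hd
    have hinv : ∀ p : ℕ × ℕ, Prod.map twin twin (Prod.map twin twin p) = p :=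
      fun p => Prod.ext (twin_twin _) (twin_twin _)
    rw [← compat_map_twin, hinv]
    exact hc _ (hst d hd)
  refine (hs.insert hc').insert ?_
  rintro d (rfl | hd)
  exacts [hcc, hc d hd]

def evenPairs (e : G ≃g H) : Set (ℕ × ℕ) := Set.range fun n => (2 * n, 2 * e n)

theorem isPartialIso_evenPairs (e : G ≃g H) :
    IsPartialIso (twinGraph G) (twinGraph H) (evenPairs e) := by
  rintro _ ⟨m, rfl⟩ _ ⟨n, rfl⟩
  simp [Compat, twinGraph_adj_double, e.injective.eq_iff, e.map_adj_iff]

/-- The pairs `(2 n, 2 e n)` are kept compatible with `q` without being listed, so that the even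
vertices are matched according to `e`. -/
def IsTwinPartialIso (e : G ≃g H) (q : List (ℕ × ℕ)) : Prop :=
  IsPartialIso (twinGraph G) (twinGraph H) ({c | c ∈ q} ∪ evenPairs e) ∧
    ∀ c ∈ q, Prod.map twin twin c ∈ q

theorem IsTwinPartialIso.map_twin_mem {e : G ≃g H} {q : List (ℕ × ℕ)}
    (hq : IsTwinPartialIso e q) {d : ℕ × ℕ} (hd : d ∈ {c | c ∈ q} ∪ evenPairs e) :
    Prod.map twin twin d ∈ {c | c ∈ q} ∪ evenPairs e := by
  rcases hd with hd | ⟨n, rfl⟩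
  · exact Or.inl (hq.2 d hd)
  · refine Or.inr ⟨n, ?_⟩
    simp [twin_eq_self_iff.2 (Nat.mul_mod_right 2 n),
      twin_eq_self_iff.2 (Nat.mul_mod_right 2 (e n))]

theorem exists_finset_adj_subset (e : G ≃g H) (q : List (ℕ × ℕ)) {x : ℕ} (hx : x % 2 = 1) :
    ∃ F : Finset (ℕ × ℕ), (∀ c ∈ F, c ∈ {c | c ∈ q} ∪ evenPairs e) ∧
      ∀ d ∈ {c | c ∈ q} ∪ evenPairs e, (twinGraph G).Adj x d.1 → d ∈ F := by
  classical
  refine ⟨q.toFinset ∪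
    ((blockData (x / 4)).1.filter (· % 2 = 0)).image fun v => (v, 2 * e (v / 2)), ?_, ?_⟩
  · intro c hc
    rcases Finset.mem_union.1 hc with hc | hc
    · exact Or.inl (List.mem_toFinset.1 hc)
    · obtain ⟨v, hv, rfl⟩ := Finset.mem_image.1 hc
      exact Or.inr ⟨v / 2, by have := (Finset.mem_filter.1 hv).2; simp; omega⟩
  · rintro d (hd | ⟨n, rfl⟩) hadj
    · exact Finset.mem_union_left _ (List.mem_toFinset.2 hd)
    · refine Finset.mem_union_right _ (Finset.mem_image.2 ⟨2 * n, ?_, by simp⟩)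
      exact Finset.mem_filter.2 ⟨mem_blockData_of_adj hx (by omega) hadj, by omega⟩

theorem IsTwinPartialIso.exists_extend_odd {e : G ≃g H} {q : List (ℕ × ℕ)}
    (hq : IsTwinPartialIso e q) {x : ℕ} (hx : x % 2 = 1) (hxq : x ∉ q.map Prod.fst) :
    ∃ y, IsTwinPartialIso e ((x, y) :: (twin x, twin y) :: q) := by
  classical
  set s := {c | c ∈ q} ∪ evenPairs e
  obtain ⟨F, hFs, hsF⟩ := exists_finset_adj_subset e q hx
  obtain ⟨N, hN⟩ := exists_div_four_lt (q.map Prod.snd).toFinset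
  obtain ⟨y, hy, hyN, hyT, hyb⟩ := exists_twinGraph_witness H
    ((F.filter fun c => (twinGraph G).Adj x c.1).image Prod.snd)
    (decide ((twinGraph G).Adj x (twin x))) N
  have hown : ∀ d ∈ s, d.2 % 2 = 0 ∨ d.2 / 4 < y / 4 := by
    rintro d (hd | ⟨n, rfl⟩)
    · exact Or.inr ((hN _ (List.mem_toFinset.2 (List.mem_map_of_mem hd))).trans_le hyN)
    · exact Or.inl (by simp)
  have hcompat : ∀ d ∈ s, Compat (twinGraph G) (twinGraph H) (x, y) d := by
    intro d hd
    refine ⟨iff_of_false ?_ ?_, ?_⟩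
    · rcases hd with hd | ⟨n, rfl⟩
      · exact fun h => hxq (List.mem_map.2 ⟨d, hd, h.symm⟩)
      · dsimp; omega
    · rintro rfl; rcases hown d hd with h | h <;> omega
    · rw [hyT d.2 (hown d hd)]
      simp only [Finset.mem_image, Finset.mem_filter]
      refine ⟨fun hadj => ⟨d, ⟨hsF d hd hadj, hadj⟩, rfl⟩, ?_⟩
      rintro ⟨c, ⟨hc, hadj⟩, hcd⟩
      rwa [← (hq.1 c (hFs c hc) d hd).1.2 hcd]
  have hcc : Compat (twinGraph G) (twinGraph H) (x, y) (twin x, twin y) := by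
    refine ⟨iff_of_false ?_ ?_, by simp [hyb]⟩ <;>
      exact fun h => by have := twin_eq_self_iff.1 h.symm; omega
  refine ⟨y, ?_, ?_⟩
  · convert isPartialIso_insert_twin hq.1 (fun d => hq.map_twin_mem) hcompat hcc using 1
    ext c
    simp [or_assoc]
  · intro c hc
    simp only [List.mem_cons] at hc ⊢
    rcases hc with rfl | rfl | hc
    · exact Or.inr (Or.inl rfl)
    · exact Or.inl (by simp [twin_twin])
    · exact Or.inr (Or.inr (hq.2 c hc))

theorem IsTwinPartialIso.nil (e : G ≃g H) : IsTwinPartialIso e [] :=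
  ⟨by simpa using isPartialIso_evenPairs e, by simp⟩

theorem IsTwinPartialIso.exists_extend {e : G ≃g H} {q : List (ℕ × ℕ)}
    (hq : IsTwinPartialIso e q) (n : ℕ) :
    ∃ q', IsTwinPartialIso e q' ∧ q ⊆ q' ∧ n ∈ q'.map Prod.fst := by
  by_cases hn : n ∈ q.map Prod.fst
  · exact ⟨q, hq, List.Subset.refl q, hn⟩
  rcases Nat.mod_two_eq_zero_or_one n with h | h
  · have hE : (n, 2 * e (n / 2)) ∈ evenPairs e := ⟨n / 2, by simp; omega⟩
    refine ⟨(n, 2 * e (n / 2)) :: q, ⟨?_, ?_⟩, List.subset_cons_self _ _, by simp⟩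
    · rw [show {c | c ∈ (n, 2 * e (n / 2)) :: q} = insert (n, 2 * e (n / 2)) {c | c ∈ q} from
        Set.ext fun _ => List.mem_cons, Set.insert_union,
        Set.insert_eq_of_mem (Set.mem_union_right _ hE)]
      exact hq.1
    · rintro c (_ | ⟨_, hc⟩)
      · simp [twin_eq_self_iff.2 h, twin_eq_self_iff.2 (Nat.mul_mod_right 2 (e (n / 2)))]
      · exact List.mem_cons_of_mem _ (hq.2 c hc)
  · obtain ⟨y, hy⟩ := hq.exists_extend_odd h hn
    exact ⟨_, hy, fun c hc => by simp [hc], by simp⟩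

theorem evenPairs_symm (e : G ≃g H) : evenPairs e.symm = Prod.swap ⁻¹' evenPairs e := by
  ext ⟨a, b⟩
  simp only [evenPairs, Set.mem_range, Set.mem_preimage, Prod.swap_prod_mk, Prod.mk.injEq]
  constructor
  · rintro ⟨n, rfl, rfl⟩; exact ⟨e.symm n, rfl, by simp⟩
  · rintro ⟨n, rfl, rfl⟩; exact ⟨e n, rfl, by simp⟩

theorem IsTwinPartialIso.swap {e : G ≃g H} {q : List (ℕ × ℕ)} (hq : IsTwinPartialIso e q) :
    IsTwinPartialIso e.symm (q.map Prod.swap) := by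
  refine ⟨?_, fun c hc => ?_⟩
  · rw [setOf_mem_map_swap, evenPairs_symm, ← Set.preimage_union]
    exact hq.1.swap
  · rw [mem_map_swap_iff] at hc ⊢
    exact hq.2 _ hc

theorem exists_twin_comm_of_iso (e : G ≃g H) :
    ∃ φ : twinGraph G ≃g twinGraph H, ∀ n, φ (twin n) = twin (φ n) := by
  have back : ∀ q, IsTwinPartialIso e q → ∀ n,
      ∃ q', IsTwinPartialIso e q' ∧ q ⊆ q' ∧ n ∈ q'.map Prod.snd := by
    intro q hq n
    obtain ⟨q', hq', hsub, hn⟩ := hq.swap.exists_extend n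
    refine ⟨q'.map Prod.swap, by simpa using hq'.swap, fun c hc => ?_, by simpa using hn⟩
    exact mem_map_swap_iff.2 (hsub (mem_map_swap_iff.2 (by simpa using hc)))
  obtain ⟨φ, hφ⟩ := exists_equiv_of_extend (IsTwinPartialIso.nil e)
    (fun q hq n => hq.exists_extend n) back
    (fun q hq c hc d hd => (hq.1 c (Or.inl hc) d (Or.inl hd)).1)
  refine ⟨⟨φ, fun {a b} => ?_⟩, fun n => ?_⟩
  · obtain ⟨q, hq, ha, hb⟩ := hφ a b
    exact (hq.1 _ (Or.inl ha) _ (Or.inl hb)).2.symm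
  · obtain ⟨q, hq, ha, hb⟩ := hφ n (twin n)
    exact (hq.1 _ (Or.inl hb) _ (Or.inl (hq.2 _ ha))).1.1 rfl

end TwinBackAndForth

section Reduction

variable {G H : SimpleGraph ℕ}

theorem nonempty_iso_of_twin_comm (φ : twinGraph G ≃g twinGraph H)
    (hφ : ∀ n, φ (twin n) = twin (φ n)) : Nonempty (G ≃g H) := by
  -- `φ` preserves the fixed points of `twin`, which are the even vertices
  have heven : ∀ m, φ (2 * m) % 2 = 0 := fun m => by
    rw [← twin_eq_self_iff, ← hφ, twin_eq_self_iff.2 (Nat.mul_mod_right 2 m)]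
  have heven' : ∀ m, φ.symm (2 * m) % 2 = 0 := fun m => by
    rw [← twin_eq_self_iff]
    apply φ.injective
    rw [hφ, RelIso.apply_symm_apply, twin_eq_self_iff.2 (Nat.mul_mod_right 2 m)]
  have hdouble : ∀ k, k % 2 = 0 → 2 * (k / 2) = k := fun k hk => by omega
  refine ⟨⟨⟨fun m => φ (2 * m) / 2, fun m => φ.symm (2 * m) / 2, fun m => ?_, fun m => ?_⟩, ?_⟩⟩
  · simp [hdouble _ (heven m)]
  · simp [hdouble _ (heven' m)]
  · intro a b
    simp only [Equiv.coe_fn_mk]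
    rw [← twinGraph_adj_double, ← twinGraph_adj_double (G := G), hdouble _ (heven a),
      hdouble _ (heven b), φ.map_adj_iff]

theorem nonempty_iso_iff_exists_twin_comm :
    Nonempty (G ≃g H) ↔ ∃ φ : twinGraph G ≃g twinGraph H, ∀ n, φ (twin n) = twin (φ n) :=
  ⟨fun ⟨e⟩ => exists_twin_comm_of_iso e, fun ⟨φ, hφ⟩ => nonempty_iso_of_twin_comm φ hφ⟩

end Reduction

theorem exists_comm_iff_exists_comm_conj {U V W : Type*} {A : SimpleGraph U} {B : SimpleGraph V}
    {C : SimpleGraph W} (θA : A ≃g C) (θB : B ≃g C) (σA : A ≃g A) (σB : B ≃g B) :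
    (∃ φ : A ≃g B, ∀ u, φ (σA u) = σB (φ u)) ↔
      ∃ β : C ≃g C, ∀ w, β (θA (σA (θA.symm w))) = θB (σB (θB.symm (β w))) := by
  constructor
  · rintro ⟨φ, hφ⟩
    exact ⟨θA.symm.trans (φ.trans θB), fun w => by simp [hφ]⟩
  · rintro ⟨β, hβ⟩
    refine ⟨θA.trans (β.trans θB.symm), fun u => ?_⟩
    simpa using congrArg θB.symm (hβ (θA u))

def codeGraph (R : ℕ × ℕ → Bool) : SimpleGraph ℕ := SimpleGraph.fromRel fun m n => R (m, n) = true

theorem codeGraph_adj {R : ℕ × ℕ → Bool} (hirr : ∀ n, R (n, n) = false)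
    (hsymm : ∀ m n, R (m, n) = R (n, m)) {m n : ℕ} : (codeGraph R).Adj m n ↔ R (m, n) = true := by
  rw [codeGraph, SimpleGraph.fromRel_adj, hsymm n m, or_self, and_iff_right_iff_imp]
  rintro h rfl
  simp [hirr] at h

theorem measurable_codeGraph_adj (m n : ℕ) :
    Measurable fun R : ℕ × ℕ → Bool => (codeGraph R).Adj m n :=
  measurable_const.and (((measurable_pi_apply _).eq measurable_const).or
    ((measurable_pi_apply _).eq measurable_const))

def codeIso {Γ : SimpleGraph ℕ} (hΓ : ExtensionProperty Γ) (R : ℕ × ℕ → Bool) :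
    twinGraph (codeGraph R) ≃g Γ :=
  canonicalIso (extensionProperty_twinGraph _) hΓ

def twinConj {Γ : SimpleGraph ℕ} (hΓ : ExtensionProperty Γ) (R : ℕ × ℕ → Bool) : Γ ≃g Γ :=
  (codeIso hΓ R).symm.trans ((twinAut _).trans (codeIso hΓ R))

theorem measurable_twinConj {Γ : SimpleGraph ℕ} (hΓ : ExtensionProperty Γ) :
    Measurable fun R => ⇑(twinConj hΓ R) := by
  have hG := measurable_twinGraph_adj measurable_codeGraph_adj
  have hΓ' : ∀ u v, Measurable fun _ : ℕ × ℕ → Bool => Γ.Adj u v := fun _ _ => measurable_const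
  refine measurable_pi_iff.2 fun n => measurable_comp_of_countable (f := fun R m => codeIso hΓ R m)
    (measurable_canonicalIso_apply hG hΓ' (fun _ => extensionProperty_twinGraph _) (fun _ => hΓ))
    (measurable_from_nat.comp ?_)
  exact measurable_canonicalIso_symm_apply hG hΓ' (fun _ => extensionProperty_twinGraph _)
    (fun _ => hΓ) n

end

theorem nonempty_iso_codeGraph_iff {R S : ℕ × ℕ → Bool} (hRirr : ∀ n, R (n, n) = false)
    (hRsymm : ∀ m n, R (m, n) = R (n, m)) (hSirr : ∀ n, S (n, n) = false)
    (hSsymm : ∀ m n, S (m, n) = S (n, m)) :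
    Nonempty (codeGraph R ≃g codeGraph S) ↔
      ∃ e : ℕ ≃ ℕ, ∀ m n : ℕ, R (m, n) = true ↔ S (e m, e n) = true := by
  simp only [← codeGraph_adj hRirr hRsymm, ← codeGraph_adj hSirr hSsymm]
  exact ⟨fun ⟨e⟩ => ⟨e.toEquiv, fun _ _ => e.map_adj_iff.symm⟩,
    fun ⟨e, he⟩ => ⟨⟨e, (he _ _).symm⟩⟩⟩

/-- Let `Γ` be a copy of the random graph on `ℕ` (a simple graph with the
extension property). The isomorphism relation on countable simple graphs, coded as
elements of the Polish space `(ℕ × ℕ) → Bool`, is Borel reducible to the conjugacy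
relation on `Aut(Γ)`, automorphisms being coded as elements of the Polish space `ℕ → ℕ`. -/
theorem stmt_12 (Γ : SimpleGraph ℕ) (hΓ : ExtensionProperty Γ) :
    ∃ f : ((ℕ × ℕ) → Bool) → (ℕ → ℕ),
      Measurable f ∧
      (∀ R : (ℕ × ℕ) → Bool, (∀ n, R (n, n) = false) → (∀ m n, R (m, n) = R (n, m)) →
        ∃ g : Γ ≃g Γ, ⇑g = f R) ∧
      (∀ R S : (ℕ × ℕ) → Bool,
        (∀ n, R (n, n) = false) → (∀ m n, R (m, n) = R (n, m)) →
        (∀ n, S (n, n) = false) → (∀ m n, S (m, n) = S (n, m)) →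
        ((∃ e : ℕ ≃ ℕ, ∀ m n : ℕ, R (m, n) = true ↔ S (e m, e n) = true) ↔
          ∃ β : Γ ≃g Γ, ∀ n : ℕ, β (f R n) = f S (β n))) := by
  refine ⟨fun R => twinConj hΓ R, measurable_twinConj hΓ, fun R _ _ => ⟨twinConj hΓ R, rfl⟩, ?_⟩
  intro R S hRirr hRsymm hSirr hSsymm
  rw [← nonempty_iso_codeGraph_iff hRirr hRsymm hSirr hSsymm, nonempty_iso_iff_exists_twin_comm]
  exact exists_comm_iff_exists_comm_conj (codeIso hΓ R) (codeIso hΓ S) (twinAut _) (twinAut _)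
end

section
/- Two permutations f and g of ℕ are conjugate in the symmetric group of ℕ if and only if they have the same cycle type, i.e., if and only if for every k ∈ ℕ with k ≥ 1 the set of orbits of f of cardinality k and the set of orbits of g of cardinality k have the same cardinality, and the set of infinite orbits of f and the set of infinite orbits of g have the same cardinality. -/
/-- The orbit of `n` under the permutation `f` of `ℕ` (the ℤ-orbit `{f^k n : k ∈ ℤ}`). -/
def permOrbit (f : Equiv.Perm ℕ) (n : ℕ) : Set ℕ :=
  Set.range (fun k : ℤ => (f ^ k) n)

/-- The set of orbits of `f` having exactly `k` elements. -/
def orbitsOfSize (f : Equiv.Perm ℕ) (k : ℕ) : Set (Set ℕ) :=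
  {s : Set ℕ | (∃ n : ℕ, s = permOrbit f n) ∧ s.Finite ∧ s.ncard = k}

/-- The set of infinite orbits of `f`. -/
def infiniteOrbits (f : Equiv.Perm ℕ) : Set (Set ℕ) :=
  {s : Set ℕ | (∃ n : ℕ, s = permOrbit f n) ∧ s.Infinite}

/-!
Choosing a base point in every orbit identifies `ℕ` with `Σ orbits, ZMod (period)`, turning
the permutation `f` into `k ↦ k + 1` on each fibre, where an infinite orbit has period `0` and
`ZMod 0 = ℤ`. Two permutations are therefore conjugate as soon as some bijection between their
orbits preserves periods, and the period of an orbit is its `ncard` (again `0` when infinite),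
so such a bijection can be glued together from the given bijections between orbits of each
size. Conversely, a conjugating permutation maps orbits onto orbits of the same size.
-/

open Function MulAction Subgroup

namespace MulAction

variable {G α : Type*} [Group G] [MulAction G α]

noncomputable def selfEquivSigmaZMod (a : G) :
    α ≃ Σ q : orbitRel.Quotient (zpowers a) α, ZMod (minimalPeriod (a • ·) q.out) :=
  (selfEquivSigmaOrbits (zpowers a) α).trans
    (Equiv.sigmaCongrRight fun q => orbitZPowersEquiv a q.out)

lemma selfEquivSigmaZMod_symm_apply (a : G) (q : orbitRel.Quotient (zpowers a) α)
    (k : ZMod (minimalPeriod (a • ·) q.out)) :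
    (selfEquivSigmaZMod a).symm ⟨q, k⟩ = a ^ (k.cast : ℤ) • q.out :=
  rfl

lemma selfEquivSigmaZMod_symm_apply_add_one (a : G) (q : orbitRel.Quotient (zpowers a) α)
    (k : ZMod (minimalPeriod (a • ·) q.out)) :
    (selfEquivSigmaZMod a).symm ⟨q, k + 1⟩ = a • (selfEquivSigmaZMod a).symm ⟨q, k⟩ := by
  obtain ⟨j, rfl⟩ := ZMod.intCast_surjective k
  rw [← Int.cast_one, ← Int.cast_add, selfEquivSigmaZMod_symm_apply,
    selfEquivSigmaZMod_symm_apply, ZMod.coe_intCast, ZMod.coe_intCast,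
    zpow_smul_mod_minimalPeriod, zpow_smul_mod_minimalPeriod, add_comm, zpow_one_add, mul_smul]

lemma ncard_orbit_zpowers (a : G) (b : α) :
    (orbit (zpowers a) b).ncard = minimalPeriod (a • ·) b := by
  rw [← Nat.card_coe_set_eq, Nat.card_congr (orbitZPowersEquiv a b), Nat.card_zmod]

lemma ncard_orbitRel_quotient_orbit (a : G) (q : orbitRel.Quotient (zpowers a) α) :
    q.orbit.ncard = minimalPeriod (a • ·) q.out := by
  rw [orbitRel.Quotient.orbit_eq_orbit_out q Quotient.out_eq', ncard_orbit_zpowers]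

theorem exists_equiv_semiconj_of_minimalPeriod_eq {H β : Type*} [Group H] [MulAction H β]
    (a : G) (b : H)
    (e : orbitRel.Quotient (zpowers a) α ≃ orbitRel.Quotient (zpowers b) β)
    (he : ∀ q, minimalPeriod (b • ·) (e q).out = minimalPeriod (a • ·) q.out) :
    ∃ h : α ≃ β, Semiconj h (a • ·) (b • ·) := by
  let F q : ZMod (minimalPeriod (a • ·) q.out) ≃+* ZMod (minimalPeriod (b • ·) (e q).out) :=
    ZMod.ringEquivCongr (he q).symm
  refine ⟨(selfEquivSigmaZMod a).trans <|
    (Equiv.sigmaCongr e fun q => (F q).toEquiv).trans (selfEquivSigmaZMod b).symm, fun x => ?_⟩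
  obtain ⟨⟨q, k⟩, rfl⟩ := (selfEquivSigmaZMod a).symm.surjective x
  simp only [Equiv.trans_apply, ← selfEquivSigmaZMod_symm_apply_add_one, Equiv.apply_symm_apply]
  simp [Equiv.sigmaCongr, selfEquivSigmaZMod_symm_apply_add_one]

end MulAction

lemma permOrbit_eq_orbit_zpowers (f : Equiv.Perm ℕ) (n : ℕ) :
    permOrbit f n = orbit (zpowers f) n := by
  ext m
  simp only [permOrbit, Set.mem_range, mem_orbit_iff, Subgroup.exists_zpowers]
  rfl

/-- Since `Set.ncard` is `0` on infinite sets, `orbitsWithNcard f 0` is the set of infinite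
orbits. -/
def orbitsWithNcard (f : Equiv.Perm ℕ) (k : ℕ) : Set (Set ℕ) :=
  {s | (∃ n, s = permOrbit f n) ∧ s.ncard = k}

lemma orbitsOfSize_eq_orbitsWithNcard (f : Equiv.Perm ℕ) {k : ℕ} (hk : k ≠ 0) :
    orbitsOfSize f k = orbitsWithNcard f k := by
  ext s
  refine ⟨fun ⟨hs, _, hk⟩ => ⟨hs, hk⟩, fun ⟨hs, hsk⟩ => ⟨hs, ?_, hsk⟩⟩
  exact Set.finite_of_ncard_ne_zero (hsk ▸ hk)

lemma infiniteOrbits_eq_orbitsWithNcard_zero (f : Equiv.Perm ℕ) :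
    infiniteOrbits f = orbitsWithNcard f 0 := by
  ext s
  refine and_congr_right fun ⟨n, hs⟩ => ⟨Set.Infinite.ncard, fun h0 hfin => ?_⟩
  have hn : n ∈ s := hs ▸ ⟨0, rfl⟩
  rw [(Set.ncard_eq_zero hfin).mp h0] at hn
  exact hn

noncomputable def minimalPeriodFiberEquivOrbitsWithNcard (f : Equiv.Perm ℕ) (k : ℕ) :
    {q : orbitRel.Quotient (zpowers f) ℕ // minimalPeriod (f • ·) q.out = k} ≃
      orbitsWithNcard f k := by
  refine Equiv.ofBijective (fun q => ⟨q.1.orbit, ⟨q.1.out, ?_⟩, ?_⟩) ⟨?_, ?_⟩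
  · rw [permOrbit_eq_orbit_zpowers, orbitRel.Quotient.orbit_eq_orbit_out _ Quotient.out_eq']
  · rw [ncard_orbitRel_quotient_orbit, q.2]
  · exact fun q q' h => Subtype.ext (orbitRel.Quotient.orbit_injective (congrArg Subtype.val h))
  · rintro ⟨s, ⟨n, rfl⟩, hk⟩
    let q : orbitRel.Quotient (zpowers f) ℕ := Quotient.mk'' n
    have hs : permOrbit f n = q.orbit := by
      rw [orbitRel.Quotient.orbit_mk, permOrbit_eq_orbit_zpowers]
    exact ⟨⟨q, by rw [← ncard_orbitRel_quotient_orbit, ← hs, hk]⟩, Subtype.ext hs.symm⟩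

lemma image_permOrbit {f g h : Equiv.Perm ℕ} (hh : ∀ n, h (f n) = g (h n)) (n : ℕ) :
    h '' permOrbit f n = permOrbit g (h n) := by
  have hc : SemiconjBy h f g := Equiv.ext hh
  rw [permOrbit, permOrbit, ← Set.range_comp]
  exact congrArg Set.range (funext fun k => DFunLike.congr_fun (hc.zpow_right k) n)

lemma image_mem_orbitsWithNcard_iff {f g h : Equiv.Perm ℕ} (hh : ∀ n, h (f n) = g (h n))
    {k : ℕ} {s : Set ℕ} : h '' s ∈ orbitsWithNcard g k ↔ s ∈ orbitsWithNcard f k := by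
  simp only [orbitsWithNcard, Set.mem_ofPred_eq, Set.ncard_image_of_injective s h.injective]
  refine and_congr_left' ⟨fun ⟨m, hm⟩ => ⟨h.symm m, Set.image_injective.mpr h.injective ?_⟩,
    fun ⟨n, hn⟩ => ⟨h n, hn ▸ image_permOrbit hh n⟩⟩
  rw [hm, image_permOrbit hh, h.apply_symm_apply]

theorem exists_semiconj_iff_nonempty_orbitsWithNcard_equiv (f g : Equiv.Perm ℕ) :
    (∃ h : Equiv.Perm ℕ, ∀ n, h (f n) = g (h n)) ↔
      ∀ k, Nonempty (orbitsWithNcard f k ≃ orbitsWithNcard g k) := by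
  constructor
  · rintro ⟨h, hh⟩ k
    exact ⟨(Equiv.Set.congr h).subtypeEquiv fun s => (image_mem_orbitsWithNcard_iff hh).symm⟩
  · intro H
    let e k := (minimalPeriodFiberEquivOrbitsWithNcard f k).trans <|
      (H k).some.trans (minimalPeriodFiberEquivOrbitsWithNcard g k).symm
    exact exists_equiv_semiconj_of_minimalPeriod_eq f g (Equiv.ofFiberEquiv e)
      (Equiv.ofFiberEquiv_map e)

/-- Two permutations of `ℕ` are conjugate in the symmetric group of `ℕ`
iff they have the same cycle type: for every `k ≥ 1` they have equally many orbits of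
cardinality `k`, and they have equally many infinite orbits. -/
theorem stmt_13 (f g : Equiv.Perm ℕ) :
    (∃ h : Equiv.Perm ℕ, ∀ n : ℕ, h (f n) = g (h n)) ↔
      ((∀ k : ℕ, 1 ≤ k → Nonempty (orbitsOfSize f k ≃ orbitsOfSize g k)) ∧
        Nonempty (infiniteOrbits f ≃ infiniteOrbits g)) := by
  rw [exists_semiconj_iff_nonempty_orbitsWithNcard_equiv, infiniteOrbits_eq_orbitsWithNcard_zero,
    infiniteOrbits_eq_orbitsWithNcard_zero]
  refine ⟨fun H => ⟨fun k hk => ?_, H 0⟩, fun ⟨Hpos, H0⟩ k => ?_⟩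
  · rw [orbitsOfSize_eq_orbitsWithNcard f (by omega), orbitsOfSize_eq_orbitsWithNcard g (by omega)]
    exact H k
  · rcases k with _ | k
    · exact H0
    · rw [← orbitsOfSize_eq_orbitsWithNcard f k.succ_ne_zero,
        ← orbitsOfSize_eq_orbitsWithNcard g k.succ_ne_zero]
      exact Hpos (k + 1) k.succ_pos
end
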